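/- arXiv:1501.06642 — 7 statements merged into one kernel-verified Lean document; each statement's English description precedes it below -/
import Mathlib

section
/- Let c, d be coprime positive integers and m, n positive integers with 0 < ⌊n/d⌋ ≤ ⌊m/c⌋, and let n̄ = n mod d. Then the total number of nonempty lines of slope d/c through lattice points of the m×n board equals 2cd(⌊n/d⌋ - 1) + (d - n̄)(m - c⌊n/d⌋) + c(n̄ + d) + n̄(m - c⌊n/d⌋). -/
/-!
Two lattice points lie on a common line of slope `d/c` iff they differ by a multiple of `(c, d)`,
i.e. iff `d x - c y` agrees on them. Sliding a board point down its line by steps of `(c, d)`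
while it stays on the board ends in the L-shaped region `x ≤ c ∨ y ≤ d`, and no two distinct
points of that region lie on a common line. Hence the lines correspond to the points of the
L-shaped region, of which there are `m n - (m - c)(n - d) = c n + d m - c d`; with
`n = d ⌊n/d⌋ + n̄` this is the claimed sum.
-/

/-- The `m × n` board as a finite set of lattice points. -/
noncomputable def board (m n : ℕ) : Finset (ℤ × ℤ) := Finset.Icc (1 : ℤ) m ×ˢ Finset.Icc (1 : ℤ) n

open Finset

def slopeIndex (c d : ℕ) (p : ℤ × ℤ) : ℤ := d * p.1 - c * p.2

noncomputable def boardCorner (c d m n : ℕ) : Finset (ℤ × ℤ) :=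
  (board m n).filter fun p => p.1 ≤ c ∨ p.2 ≤ d

section

variable {c d m n : ℕ}

theorem exists_eq_add_of_slopeIndex_eq (hc : 0 < c) (hcd : c.Coprime d) {p q : ℤ × ℤ}
    (h : slopeIndex c d p = slopeIndex c d q) :
    ∃ t : ℤ, q.1 = p.1 + t * c ∧ q.2 = p.2 + t * d := by
  have key : (c : ℤ) * (q.2 - p.2) = d * (q.1 - p.1) := by
    unfold slopeIndex at h; linear_combination h
  obtain ⟨t, ht⟩ : (c : ℤ) ∣ q.1 - p.1 :=
    (Nat.isCoprime_iff_coprime.mpr hcd).dvd_of_dvd_mul_left ⟨_, key.symm⟩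
  refine ⟨t, by linear_combination ht, ?_⟩
  have : (c : ℤ) * (q.2 - p.2) = c * (t * d) := by rw [key, ht]; ring
  linear_combination mul_left_cancel₀ (by positivity) this

theorem exists_mem_boardCorner_slopeIndex_eq (hc : 0 < c) (hd : 0 < d) {p : ℤ × ℤ}
    (hp : p ∈ board m n) :
    ∃ q ∈ boardCorner c d m n, slopeIndex c d q = slopeIndex c d p := by
  obtain ⟨x, y⟩ := p
  simp only [board, mem_product, mem_Icc] at hp
  have hc' : (0 : ℤ) < c := by exact_mod_cast hc
  have hd' : (0 : ℤ) < d := by exact_mod_cast hd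
  -- the number of steps `(c, d)` one can go down from `(x, y)` without leaving the board
  set t := min ((x - 1) / c) ((y - 1) / d) with htdef
  have ht : 0 ≤ t :=
    le_min (Int.ediv_nonneg (by omega) hc'.le) (Int.ediv_nonneg (by omega) hd'.le)
  have htx : t * c ≤ x - 1 :=
    (mul_le_mul_of_nonneg_right (min_le_left _ _) hc'.le).trans (Int.ediv_mul_le _ hc'.ne')
  have hty : t * d ≤ y - 1 :=
    (mul_le_mul_of_nonneg_right (min_le_right _ _) hd'.le).trans (Int.ediv_mul_le _ hd'.ne')
  have hstop : x - 1 < (t + 1) * c ∨ y - 1 < (t + 1) * d := by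
    rcases min_choice ((x - 1) / c) ((y - 1) / d) with h | h
    · exact .inl (by rw [htdef, h]; exact Int.lt_ediv_add_one_mul_self _ hc')
    · exact .inr (by rw [htdef, h]; exact Int.lt_ediv_add_one_mul_self _ hd')
  refine ⟨(x - t * c, y - t * d), ?_, by unfold slopeIndex; ring⟩
  simp only [boardCorner, board, mem_filter, mem_product, mem_Icc]
  have := mul_nonneg ht hc'.le
  have := mul_nonneg ht hd'.le
  refine ⟨⟨⟨by omega, by omega⟩, by omega, by omega⟩, ?_⟩
  rcases hstop with h | h
  · exact .inl (by linarith)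
  · exact .inr (by linarith)

theorem injOn_slopeIndex_boardCorner (hc : 0 < c) (hcd : c.Coprime d) :
    Set.InjOn (slopeIndex c d) (boardCorner c d m n) := by
  intro p hp q hq h
  simp only [boardCorner, board, coe_filter, mem_product, mem_Icc, Set.mem_ofPred_eq] at hp hq
  obtain ⟨t, hx, hy⟩ := exists_eq_add_of_slopeIndex_eq hc hcd h
  rcases lt_trichotomy t 0 with ht | rfl | ht
  · have : t * c ≤ -c := by nlinarith
    have : t * d ≤ -d := by nlinarith
    omega
  · ext <;> simp_all
  · have : (c : ℤ) ≤ t * c := by nlinarith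
    have : (d : ℤ) ≤ t * d := by nlinarith
    omega

theorem card_boardCorner_add :
    #(boardCorner c d m n) + (m - c) * (n - d) = m * n := by
  have hrest : (board m n).filter (fun p : ℤ × ℤ => ¬(p.1 ≤ c ∨ p.2 ≤ d))
      = Icc ((c : ℤ) + 1) m ×ˢ Icc ((d : ℤ) + 1) n := by
    ext p
    simp only [board, mem_filter, mem_product, mem_Icc]
    omega
  have hcard := card_filter_add_card_filter_not (s := board m n)
    (fun p : ℤ × ℤ => p.1 ≤ (c : ℤ) ∨ p.2 ≤ (d : ℤ))
  rw [hrest] at hcard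
  simpa [boardCorner, board, card_product, Int.card_Icc] using hcard

theorem card_image_slopeIndex_board_add (hc : 0 < c) (hd : 0 < d) (hcd : c.Coprime d)
    (hcm : c ≤ m) (hdn : d ≤ n) :
    #((board m n).image (slopeIndex c d)) + c * d = c * n + d * m := by
  have himage :
      (board m n).image (slopeIndex c d) = (boardCorner c d m n).image (slopeIndex c d) := by
    refine Subset.antisymm (fun v hv => ?_) (image_subset_image (filter_subset _ _))
    obtain ⟨p, hp, rfl⟩ := mem_image.mp hv
    obtain ⟨q, hq, hqp⟩ := exists_mem_boardCorner_slopeIndex_eq hc hd hp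
    exact mem_image.mpr ⟨q, hq, hqp⟩
  have hcorner : #(boardCorner c d m n) + (m - c) * (n - d) = m * n := card_boardCorner_add
  rw [himage, card_image_of_injOn (injOn_slopeIndex_boardCorner hc hcd)]
  zify [hcm, hdn] at hcorner ⊢
  linear_combination hcorner

end

theorem number_of_lines_general (c d m n : ℕ) (hc : 0 < c) (hd : 0 < d)
    (hcd : Nat.Coprime c d) (h1 : 0 < n / d) (h2 : n / d ≤ m / c) :
    ((board m n).image (fun p => (d : ℤ) * p.1 - (c : ℤ) * p.2)).card
      = 2 * c * d * (n / d - 1)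
        + ((d - n % d) * (m - c * (n / d)) + c * (n % d + d))
        + (n % d) * (m - c * (n / d)) := by
  have hdn : d ≤ n := (Nat.one_le_div_iff hd).mp h1
  have hcq : c * (n / d) ≤ m := (Nat.mul_le_mul_left c h2).trans (Nat.mul_div_le m c)
  have hcm : c ≤ m := (Nat.le_mul_of_pos_right c h1).trans hcq
  have hcount := card_image_slopeIndex_board_add hc hd hcd hcm hdn
  have hr : n % d ≤ d := (Nat.mod_lt n hd).le
  change #((board m n).image (slopeIndex c d)) = _
  zify [hcq, hr, Nat.one_le_iff_ne_zero.mpr h1.ne'] at hcount ⊢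
  linear_combination hcount - (c : ℤ) * Int.mul_ediv_add_emod (n : ℤ) d

/-- Lemma 2.1 (total count): the number of nonempty lines of slope `d/c`
meeting the `m × n` board. Two points lie on a common line of slope `d/c`
(with `gcd(c,d) = 1`) iff they have the same value of `d*x - c*y`, so the
lines correspond to the image of the board under this invariant. -/
theorem number_of_lines (c d m n : ℕ) (hc : 0 < c) (hd : 0 < d) (hm : 0 < m) (hn : 0 < n)
    (hcd : Nat.Coprime c d) (h1 : 0 < n / d) (h2 : n / d ≤ m / c) :
    ((board m n).image (fun p => (d : ℤ) * p.1 - (c : ℤ) * p.2)).card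
      = 2 * c * d * (n / d - 1)
        + ((d - n % d) * (m - c * (n / d)) + c * (n % d + d))
        + (n % d) * (m - c * (n / d)) :=
  number_of_lines_general c d m n hc hd hcd h1 h2
end

section
/- Let c, d be coprime positive integers and m, n positive integers with 0 < ⌊n/d⌋ ≤ ⌊m/c⌋, and n̄ = n mod d. Define α(3) = 2cd·Σ_{l=1}^{⌊n/d⌋-1} l³ + ((d-n̄)(m-c⌊n/d⌋)+c(n̄+d))·⌊n/d⌋³ + n̄(m-c⌊n/d⌋)·(⌊n/d⌋+1)³. Then α(3) = (2dmn³ - cn⁴)/(2d³) + cn²/(2d) + (n̄(d-n̄)/d³)·((3n+d-2n̄)dm - (3n+2d-4n̄)cn + 3cn̄(d-n̄)/2). -/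
/-!
Nicomachus' formula `∑_{l=1}^{k} l³ = k²(k+1)²/4` puts the sum in closed form, and substituting
`n = d t + r` turns the claim into a polynomial identity in `c, d, m, t, r` after clearing `d`.
-/

open Finset

variable {K : Type*} [Field K] [CharZero K]

theorem sum_Icc_one_pow_three (k : ℕ) :
    ∑ l ∈ Icc 1 k, (l : K) ^ 3 = (k : K) ^ 2 * ((k : K) + 1) ^ 2 / 4 := by
  induction k with
  | zero => simp
  | succ k ih =>
    rw [sum_Icc_succ_top (by omega), ih]
    push_cast
    ring

/-- At `t = 0` both sides vanish, the truncated `t - 1` giving an empty sum. -/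
theorem sum_Icc_one_sub_one_pow_three (t : ℕ) :
    ∑ l ∈ Icc 1 (t - 1), (l : K) ^ 3 = ((t : K) - 1) ^ 2 * (t : K) ^ 2 / 4 := by
  rcases t with _ | t
  · simp
  · rw [sum_Icc_one_pow_three]
    push_cast
    ring

theorem alpha_three_polynomial_identity (c d m t r : K) (hd : d ≠ 0) :
    2 * c * d * ((t - 1) ^ 2 * t ^ 2 / 4)
      + ((d - r) * (m - c * t) + c * (r + d)) * t ^ 3 + r * (m - c * t) * (t + 1) ^ 3
    = (2 * d * m * (d * t + r) ^ 3 - c * (d * t + r) ^ 4) / (2 * d ^ 3)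
      + c * (d * t + r) ^ 2 / (2 * d)
      + (r * (d - r) / d ^ 3)
        * ((3 * (d * t + r) + d - 2 * r) * d * m
            - (3 * (d * t + r) + 2 * d - 4 * r) * c * (d * t + r)
            + 3 * c * r * (d - r) / 2) := by
  field_simp
  ring

theorem alpha_three_closed_form_general (c d m n t r : ℕ) (hd : 0 < d) (ht : t = n / d) (hr : r = n % d) :
    2 * (c : ℚ) * d * (∑ l ∈ Finset.Icc 1 (t - 1), (l : ℚ) ^ 3)
      + (((d : ℚ) - r) * ((m : ℚ) - c * t) + c * ((r : ℚ) + d)) * (t : ℚ) ^ 3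
      + (r : ℚ) * ((m : ℚ) - c * t) * ((t : ℚ) + 1) ^ 3
    = (2 * (d : ℚ) * m * n ^ 3 - c * n ^ 4) / (2 * d ^ 3) + c * n ^ 2 / (2 * d)
      + ((r : ℚ) * ((d : ℚ) - r) / d ^ 3)
        * ((3 * (n : ℚ) + d - 2 * r) * d * m - (3 * (n : ℚ) + 2 * d - 4 * r) * c * n
            + 3 * c * r * ((d : ℚ) - r) / 2) := by
  have hn : (n : ℚ) = d * t + r := by
    rw [ht, hr]
    exact_mod_cast (Nat.div_add_mod n d).symm
  rw [sum_Icc_one_sub_one_pow_three, hn]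
  exact alpha_three_polynomial_identity _ _ _ _ _ (by positivity)

/-- The closed form for the third power sum `α^{d/c}(3; m, n)` of the multiset
of line sizes on the `m × n` board. -/
theorem alpha_three_closed_form (c d m n t r : ℕ) (hc : 0 < c) (hd : 0 < d) (hm : 0 < m)
    (hn : 0 < n) (hcd : Nat.Coprime c d) (ht : t = n / d) (hr : r = n % d)
    (h1 : 0 < n / d) (h2 : n / d ≤ m / c) :
    2 * (c : ℚ) * d * (∑ l ∈ Finset.Icc 1 (t - 1), (l : ℚ) ^ 3)
      + (((d : ℚ) - r) * ((m : ℚ) - c * t) + c * ((r : ℚ) + d)) * (t : ℚ) ^ 3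
      + (r : ℚ) * ((m : ℚ) - c * t) * ((t : ℚ) + 1) ^ 3
    = (2 * (d : ℚ) * m * n ^ 3 - c * n ^ 4) / (2 * d ^ 3) + c * n ^ 2 / (2 * d)
      + ((r : ℚ) * ((d : ℚ) - r) / d ^ 3)
        * ((3 * (n : ℚ) + d - 2 * r) * d * m - (3 * (n : ℚ) + 2 * d - 4 * r) * c * n
            + 3 * c * r * ((d : ℚ) - r) / 2) :=
  alpha_three_closed_form_general c d m n t r hd ht hr
end

section
/- Let L be a finite multiset of natural numbers and q a positive integer. Then the q-th elementary symmetric function of L, i.e., the sum over all q-element sub-multisets {l₁,…,l_q} of L (chosen without repetition of positions) of the product l₁⋯l_q, equals the sum over all partitions λ of q, where λ has distinct parts λ₁,…,λ_k with multiplicities n₁,…,n_k, of (-1)^{q - Σnᵢ} · Π_{i=1}^{k} (1/(λᵢ^{nᵢ} nᵢ!)) · (Σ_{l∈L} l^{λᵢ})^{nᵢ}. -/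
/-!
Both sides satisfy Newton's recurrence `q e_q = ∑_{i=1}^q (-1)^(i-1) pᵢ e_{q-i}` and equal `1` at
`q = 0`; in characteristic zero this recurrence determines the sequence. The summand of a partition
with `nₐ` parts equal to `a` is `∏ₐ xₐ^nₐ / nₐ!` with `xₐ = (-1)^(a-1) pₐ / a`. Multiplying by
`q = ∑ₐ a nₐ` and removing one part `a` gives the recurrence, because
`nₐ · xₐ^nₐ / nₐ! = xₐ · xₐ^(nₐ-1) / (nₐ-1)!`.
-/

open Finset

theorem Multiset.mul_esymm_eq_sum_Icc {R : Type*} [CommRing R] (s : Multiset R) (k : ℕ) :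
    k * s.esymm k =
      ∑ i ∈ Finset.Icc 1 k, (-1) ^ (i - 1) * (s.map (· ^ i)).sum * s.esymm (k - i) := by
  classical
  set f : s.ToType → R := fun x => x
  have hpsum (i : ℕ) :
      MvPolynomial.aeval f (MvPolynomial.psum s.ToType R i) = (s.map (· ^ i)).sum := by
    rw [MvPolynomial.psum, map_sum, Finset.sum_eq_multiset_sum]
    simp only [map_pow, MvPolynomial.aeval_X]
    exact congrArg Multiset.sum (s.map_univ (· ^ i))
  have newton := congrArg (MvPolynomial.aeval f) (MvPolynomial.mul_esymm_eq_sum s.ToType R k)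
  simp only [map_mul, map_natCast, map_pow, map_neg, map_one, map_sum, hpsum,
    MvPolynomial.aeval_esymm_eq_multiset_esymm, f, map_univ_coe] at newton
  rw [newton, Finset.mul_sum]
  refine Finset.sum_nbij' Prod.snd (fun i => (k - i, i)) ?_ ?_ ?_ (fun _ _ => rfl) ?_
  · rintro ⟨a, b⟩ h
    simp only [Finset.mem_filter, Finset.HasAntidiagonal.mem_antidiagonal, Finset.mem_Icc] at h ⊢
    omega
  · intro i h
    simp only [Finset.mem_filter, Finset.HasAntidiagonal.mem_antidiagonal, Finset.mem_Icc] at h ⊢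
    omega
  · rintro ⟨a, b⟩ h
    simp only [Finset.mem_filter, Finset.HasAntidiagonal.mem_antidiagonal, Prod.mk.injEq,
      and_true] at h ⊢
    omega
  · rintro ⟨a, b⟩ h
    simp only [Finset.mem_filter, Finset.HasAntidiagonal.mem_antidiagonal] at h
    obtain ⟨rfl, hlt⟩ := h
    have hsign : (-1 : R) ^ (a + b + 1) * (-1) ^ a = (-1) ^ (b - 1) := by
      rw [← pow_add, show a + b + 1 + a = (b - 1) + 2 * (a + 1) by omega, pow_add, pow_mul]
      simp
    simp only [Nat.add_sub_cancel_right]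
    linear_combination (s.esymm a * (s.map (· ^ b)).sum) * hsign

theorem eq_of_natCast_mul_eq_sum_Icc {R : Type*} [Ring R] [NoZeroDivisors R] [CharZero R]
    {f g : ℕ → R} (c : ℕ → R) (h0 : f 0 = g 0)
    (hf : ∀ n, n * f n = ∑ i ∈ Icc 1 n, c i * f (n - i))
    (hg : ∀ n, n * g n = ∑ i ∈ Icc 1 n, c i * g (n - i)) (n : ℕ) : f n = g n := by
  induction n using Nat.strong_induction_on with
  | _ n ih =>
    rcases n.eq_zero_or_pos with rfl | hn
    · exact h0
    · refine mul_left_cancel₀ (Nat.cast_ne_zero.2 hn.ne') ?_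
      rw [hf, hg]
      exact sum_congr rfl fun i hi => by rw [ih (n - i) (Nat.sub_lt hn (mem_Icc.1 hi).1)]

namespace Multiset

variable {α K : Type*} [DecidableEq α] [Semifield K]

/-- The coefficient of `∏ₐ tₐ ^ count a m` in `∏ₐ exp (x a * tₐ)`. -/
noncomputable def expWeight (x : α → K) (m : Multiset α) : K :=
  ∏ a ∈ m.toFinset, x a ^ m.count a / (m.count a).factorial

theorem expWeight_eq_prod_of_toFinset_subset (x : α → K) {m : Multiset α} {t : Finset α}
    (h : m.toFinset ⊆ t) :
    m.expWeight x = ∏ a ∈ t, x a ^ m.count a / (m.count a).factorial :=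
  Finset.prod_subset h fun a _ ha => by
    rw [count_eq_zero.2 (by simpa using ha), pow_zero, Nat.factorial_zero, Nat.cast_one, div_one]

theorem count_add_one_mul_expWeight_cons [CharZero K] (x : α → K) (a : α) (m : Multiset α) :
    (m.count a + 1) * (a ::ₘ m).expWeight x = x a * m.expWeight x := by
  have ha : a ∈ (a ::ₘ m).toFinset := by simp
  rw [expWeight, expWeight_eq_prod_of_toFinset_subset x (toFinset_subset.2 (subset_cons m a)),
    ← mul_prod_erase _ _ ha, ← mul_prod_erase _ _ ha, count_cons_self]
  have hrest : ∏ b ∈ (a ::ₘ m).toFinset.erase a,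
      x b ^ (a ::ₘ m).count b / ((a ::ₘ m).count b).factorial =
      ∏ b ∈ (a ::ₘ m).toFinset.erase a, x b ^ m.count b / (m.count b).factorial :=
    prod_congr rfl fun b hb => by rw [count_cons_of_ne (ne_of_mem_erase hb)]
  rw [hrest, Nat.factorial_succ, Nat.cast_mul, pow_succ]
  field_simp
  push_cast
  ring

end Multiset

namespace Nat.Partition

theorem sum_toFinset_mul_count {n : ℕ} (π : n.Partition) :
    ∑ a ∈ π.parts.toFinset, a * π.parts.count a = n :=
  calc ∑ a ∈ π.parts.toFinset, a * π.parts.count a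
      = ∑ a ∈ π.parts.toFinset, π.parts.count a • a := sum_congr rfl fun _ _ => mul_comm _ _
    _ = n := (Finset.sum_multiset_count π.parts).symm.trans π.parts_sum

theorem sum_toFinset_sub_one_mul_count {n : ℕ} (π : n.Partition) :
    ∑ a ∈ π.parts.toFinset, (a - 1) * π.parts.count a = n - Multiset.card π.parts := by
  have hsplit :
      ∑ a ∈ π.parts.toFinset, (a - 1) * π.parts.count a + Multiset.card π.parts = n := by
    rw [← Multiset.toFinset_sum_count_eq, ← sum_add_distrib]
    conv_rhs => rw [← π.sum_toFinset_mul_count]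
    refine sum_congr rfl fun a ha => ?_
    obtain ⟨b, rfl⟩ :=
      Nat.exists_eq_add_one_of_ne_zero (π.parts_pos (Multiset.mem_toFinset.1 ha)).ne'
    simp only [Nat.add_sub_cancel]
    ring
  omega

theorem sum_sum_toFinset_parts_eq_sum_sum_cons {M : Type*} [AddCommMonoid M] (n : ℕ)
    (f : ℕ → Multiset ℕ → M) :
    ∑ π : n.Partition, ∑ i ∈ π.parts.toFinset, f i π.parts =
      ∑ i ∈ Icc 1 n, ∑ μ : (n - i).Partition, f i (i ::ₘ μ.parts) := by
  rw [sum_comm' (t' := Icc 1 n) (s' := fun i => {π | i ∈ π.parts})]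
  · refine sum_congr rfl fun i hi => ?_
    obtain ⟨hi1, hin⟩ := mem_Icc.1 hi
    rw [sum_subtype (p := fun π : n.Partition => i ∈ π.parts) _ (fun π => by simp)]
    exact (Fintype.sum_equiv (partitionWithPartEquiv hi1 hin).symm _ _ fun μ => by
      rw [partitionWithPartEquiv_symm_apply_parts]).symm
  · intro π i
    simp only [mem_univ, Multiset.mem_toFinset, true_and, mem_filter, mem_Icc]
    exact ⟨fun h => ⟨h, π.parts_pos h, π.le_of_mem_parts h⟩, And.left⟩

variable {K : Type*} [Field K]

noncomputable def expWeightSum (x : ℕ → K) (n : ℕ) : K :=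
  ∑ π : n.Partition, π.parts.expWeight x

theorem expWeightSum_zero (x : ℕ → K) : expWeightSum x 0 = 1 := by
  simp [expWeightSum, Multiset.expWeight]

theorem natCast_mul_expWeightSum [CharZero K] (x : ℕ → K) (n : ℕ) :
    n * expWeightSum x n = ∑ i ∈ Icc 1 n, i * x i * expWeightSum x (n - i) :=
  calc (n : K) * expWeightSum x n
      = ∑ π : n.Partition, ∑ i ∈ π.parts.toFinset,
          (i : K) * (π.parts.count i * π.parts.expWeight x) := by
        rw [expWeightSum, mul_sum]
        refine sum_congr rfl fun π _ => ?_
        simp only [← mul_assoc, ← sum_mul]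
        congr 1
        exact_mod_cast π.sum_toFinset_mul_count.symm
    _ = ∑ i ∈ Icc 1 n, ∑ μ : (n - i).Partition,
          (i : K) * ((i ::ₘ μ.parts).count i * (i ::ₘ μ.parts).expWeight x) :=
        sum_sum_toFinset_parts_eq_sum_sum_cons n
          fun i m => (i : K) * (m.count i * m.expWeight x)
    _ = ∑ i ∈ Icc 1 n, i * x i * expWeightSum x (n - i) := by
        simp only [Multiset.count_cons_self, Nat.cast_succ,
          Multiset.count_add_one_mul_expWeight_cons, expWeightSum, mul_sum, mul_assoc]

theorem expWeight_eq_neg_one_pow_mul_prod {n : ℕ} (π : n.Partition) (p : ℕ → K) :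
    π.parts.expWeight (fun a => (-1) ^ (a - 1) * p a / a) =
      (-1) ^ (n - Multiset.card π.parts) *
        ∏ a ∈ π.parts.toFinset,
          1 / ((a : K) ^ π.parts.count a * (π.parts.count a).factorial) *
            p a ^ π.parts.count a := by
  rw [← π.sum_toFinset_sub_one_mul_count, ← prod_pow_eq_pow_sum, ← prod_mul_distrib,
    Multiset.expWeight]
  refine prod_congr rfl fun a _ => ?_
  rw [pow_mul]
  ring

end Nat.Partition

theorem Multiset.esymm_eq_sum_expWeight {K : Type*} [Field K] [CharZero K] (s : Multiset K)
    (n : ℕ) :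
    s.esymm n = ∑ π : n.Partition,
      π.parts.expWeight fun i : ℕ => (-1) ^ (i - 1) * (s.map (· ^ i)).sum / (i : K) := by
  refine eq_of_natCast_mul_eq_sum_Icc (fun i => (-1) ^ (i - 1) * (s.map (· ^ i)).sum)
    (g := Nat.Partition.expWeightSum _)
    (by simp [Multiset.esymm, Nat.Partition.expWeightSum_zero])
    s.mul_esymm_eq_sum_Icc (fun k => ?_) n
  refine (Nat.Partition.natCast_mul_expWeightSum _ k).trans (sum_congr rfl fun i hi => ?_)
  rw [mul_div_cancel₀ _ (Nat.cast_ne_zero.2 (Nat.one_le_iff_ne_zero.1 (mem_Icc.1 hi).1))]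

theorem esymm_eq_sum_over_partitions_general (L : Multiset ℕ) (q : ℕ) :
    (L.map (fun l => (l : ℚ))).esymm q
      = ∑ π : Nat.Partition q,
          (-1 : ℚ) ^ (q - Multiset.card π.parts) *
            ∏ a ∈ π.parts.toFinset,
              (1 / ((a : ℚ) ^ (π.parts.count a) * (Nat.factorial (π.parts.count a) : ℚ))) *
                ((L.map (fun l => (l : ℚ) ^ a)).sum) ^ (π.parts.count a) := by
  -- `(l : ℚ)` is elaborated by lifting `L` into `Multiset ℚ` through the monad coercion.
  simp only [Multiset.pure_def, Multiset.bind_def, Multiset.bind_singleton, Multiset.map_id']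
  rw [Multiset.esymm_eq_sum_expWeight]
  exact sum_congr rfl fun π _ => π.expWeight_eq_neg_one_pow_mul_prod _

/-- Newton's identity, as used in Proposition 3.1: the `q`-th elementary symmetric
function of a finite multiset `L` equals a signed sum over integer partitions of `q`
of products of power sums, weighted by the reciprocal of the centralizer order
`z(λ) = ∏ λᵢ^{nᵢ} nᵢ!`. -/
theorem esymm_eq_sum_over_partitions (L : Multiset ℕ) (q : ℕ) (hq : 0 < q) :
    (L.map (fun l => (l : ℚ))).esymm q
      = ∑ π : Nat.Partition q,
          (-1 : ℚ) ^ (q - Multiset.card π.parts) *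
            ∏ a ∈ π.parts.toFinset,
              (1 / ((a : ℚ) ^ (π.parts.count a) * (Nat.factorial (π.parts.count a) : ℚ))) *
                ((L.map (fun l => (l : ℚ) ^ a)).sum) ^ (π.parts.count a) :=
  esymm_eq_sum_over_partitions_general L q
end

section
/- Let c, d be coprime positive integers with c ≤ d, and fix a positive integer q. For n ≥ qd (so that the counts are given by the quasipolynomial formula), the number u(q; n) of nonattacking configurations of q one-move riders with move (c,d) on the n×n board is a quasipolynomial in n whose coefficients are periodic with period dividing d; explicitly, u(q;n) is given by Σ over partitions λ ⊢ q of ε(λ)/z(λ) · Π_i p_{λᵢ}(n), where each power sum p_λ(n) = Σ_{l ∈ L^{d/c}(n,n)} l^λ depends on n only through n and n mod d polynomially, hence u(q; n+d) and u(q; n) agree as polynomial expressions in n with the same residue n mod d. -/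
/-- The multiset `L^{d/c}(m,n)` of sizes of intersections of lines of slope `d/c`
with the `m × n` board: lines are the fibers of the invariant `p ↦ d·p₁ - c·p₂`. -/
noncomputable def lineSizes (c d m n : ℕ) : Multiset ℕ :=
  ((board m n).image (fun p => (d : ℤ) * p.1 - (c : ℤ) * p.2)).val.map
    (fun b => ((board m n).filter (fun p => (d : ℤ) * p.1 - (c : ℤ) * p.2 = b)).card)

/-!
The lines of slope `d/c` are the fibres of `p ↦ d p₁ - c p₂`; since `gcd(c, d) = 1`, each of
them meets the board in an arithmetic progression of step `v = (c, d)`. Counting the pairs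
`(P, P + l v)` of board points line by line therefore gives, for every `l`,
`∑_L (|L| - l)₊ = (n - l c)₊ (n - l d)₊`. These truncated moments determine all power sums
`∑_L |L|^k`, and for `n ≡ r (mod d)` they come out, by Faulhaber's formula, as polynomials in
`n` and `⌊n/d⌋ = (n - r)/d`. Newton's identities express `e_q` through the power sums, and
functions agreeing with a polynomial on a residue class form a `ℚ`-subalgebra.
-/

open Finset Polynomial

theorem IsCoprime.mul_fst_sub_mul_snd_eq_iff {R : Type*} [CommRing R] {a b : R}
    (h : IsCoprime a b) {P Q : R × R} :
    b * P.1 - a * P.2 = b * Q.1 - a * Q.2 ↔ ∃ t : R, P = Q + t • (a, b) := by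
  constructor
  · intro hPQ
    obtain ⟨u, w, huw⟩ := h
    refine ⟨u * (P.1 - Q.1) + w * (P.2 - Q.2), Prod.ext ?_ ?_⟩
    · simp only [Prod.fst_add, Prod.smul_mk, smul_eq_mul]
      linear_combination (Q.1 - P.1) * huw + w * hPQ
    · simp only [Prod.snd_add, Prod.smul_mk, smul_eq_mul]
      linear_combination (Q.2 - P.2) * huw - u * hPQ
  · rintro ⟨t, rfl⟩
    simp only [Prod.fst_add, Prod.snd_add, Prod.smul_mk, smul_eq_mul]
    ring

theorem Finset.card_filter_add_mem_of_ordConnected {I : Finset ℤ}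
    (hI : (I : Set ℤ).OrdConnected) (l : ℕ) : #{t ∈ I | t + (l : ℤ) ∈ I} = #I - l := by
  rcases I.eq_empty_or_nonempty with rfl | hne
  · simp
  have hIcc : I = Icc (I.min' hne) (I.max' hne) := by
    ext t
    refine ⟨fun ht => mem_Icc.2 ⟨I.min'_le t ht, I.le_max' t ht⟩, fun ht => ?_⟩
    exact hI.out (I.min'_mem hne) (I.max'_mem hne) (mem_Icc.1 ht)
  generalize I.min' hne = a, I.max' hne = b at hIcc
  subst hIcc
  have : {t ∈ Icc a b | t + (l : ℤ) ∈ Icc a b} = Icc a (b - l) := by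
    ext t; simp only [mem_filter, mem_Icc]; omega
  rw [this, Int.card_Icc, Int.card_Icc]
  omega

theorem card_filter_add_smul_mem {B : Finset (ℤ × ℤ)} (hB : (B : Set (ℤ × ℤ)).OrdConnected)
    {v : ℤ × ℤ} (hv0 : 0 ≤ v) (hv : v ≠ 0) (P₀ : ℤ × ℤ) (L : ℤ × ℤ → Prop) [DecidablePred L]
    (hL : ∀ P, L P ↔ ∃ t : ℤ, P = P₀ + t • v) (l : ℕ) :
    #{P ∈ B | L P ∧ P + (l : ℤ) • v ∈ B} = #{P ∈ B | L P} - l := by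
  let e : ℤ ↪ ℤ × ℤ :=
    ⟨fun t => P₀ + t • v, fun s t h => smul_left_injective ℤ hv (add_left_cancel h)⟩
  have he (t : ℤ) : e t = P₀ + t • v := rfl
  let I := B.preimage e e.injective.injOn
  have hline : {P ∈ B | L P} = I.map e := by
    ext P
    simp only [mem_filter, mem_map, mem_preimage, hL, I, he]
    constructor
    · rintro ⟨hP, t, rfl⟩
      exact ⟨t, hP, rfl⟩
    · rintro ⟨t, hP, rfl⟩
      exact ⟨hP, t, rfl⟩
  have hshift : {P ∈ B | L P ∧ P + (l : ℤ) • v ∈ B} = {t ∈ I | t + (l : ℤ) ∈ I}.map e := by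
    ext P
    simp only [mem_filter, mem_map, mem_preimage, hL, I, he, add_smul]
    constructor
    · rintro ⟨hP, ⟨t, rfl⟩, hl⟩
      exact ⟨t, ⟨hP, by rwa [← add_assoc]⟩, rfl⟩
    · rintro ⟨t, ⟨hP, hl⟩, rfl⟩
      exact ⟨hP, ⟨t, rfl⟩, by rwa [add_assoc]⟩
  have hI : (I : Set ℤ).OrdConnected := by
    rw [coe_preimage]
    exact hB.preimage_mono fun s t hst => by
      simpa [e] using smul_le_smul_of_nonneg_right hst hv0
  rw [hline, hshift, card_map, card_map, card_filter_add_mem_of_ordConnected hI]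

theorem Multiset.sum_map_eq_sum_range_mul_tsub {R : Type*} [CommRing R] (S : Multiset ℕ)
    (f : ℕ → R) (hf : f 0 = 0) {M : ℕ} (hM : (S.map (· - M)).sum = 0) :
    (S.map f).sum = ∑ l ∈ Finset.range M,
      (f (l + 1) - f l) * (((S.map (· - l)).sum : R) - (S.map (· - (l + 1))).sum) := by
  have hjump (s : ℕ) (hs : s ≤ M) : f s = ∑ l ∈ Finset.range M,
      (f (l + 1) - f l) * (((s - l : ℕ) : R) - ((s - (l + 1) : ℕ) : R)) := by
    calc f s = ∑ l ∈ Finset.range s, (f (l + 1) - f l) := by rw [sum_range_sub, hf, sub_zero]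
      _ = ∑ l ∈ Finset.range M with l < s, (f (l + 1) - f l) := by
        congr 1
        ext l
        simp only [Finset.mem_range, Finset.mem_filter]
        omega
      _ = _ := by
        rw [sum_filter]
        refine sum_congr rfl fun l _ => ?_
        split_ifs with hl
        · rw [show s - l = s - (l + 1) + 1 by omega]
          push_cast
          ring
        · rw [Nat.sub_eq_zero_of_le (by omega), Nat.sub_eq_zero_of_le (by omega)]
          simp
  have hle (s : ℕ) (hs : s ∈ S) : s ≤ M :=
    Nat.sub_eq_zero_iff_le.1 (Multiset.sum_eq_zero_iff.1 hM _ (Multiset.mem_map_of_mem _ hs))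
  rw [Multiset.map_congr rfl fun s hs => hjump s (hle s hs)]
  rw [Multiset.sum_map_sum]
  refine sum_congr rfl fun l _ => ?_
  rw [Multiset.sum_map_mul_left, Multiset.sum_map_sub, Nat.cast_multiset_sum, Nat.cast_multiset_sum,
    Multiset.map_map, Multiset.map_map]
  rfl

theorem Multiset.esymm_map_ringHom {R S : Type*} [CommSemiring R] [CommSemiring S]
    (f : R →+* S) (s : Multiset R) (k : ℕ) : (s.map f).esymm k = f (s.esymm k) := by
  simp [Multiset.esymm, Multiset.powersetCard_map, map_multiset_sum, Multiset.map_map,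
    map_multiset_prod]

theorem Multiset.mul_esymm_eq_sum {R : Type*} [CommRing R] (s : Multiset R) (k : ℕ) :
    k * s.esymm k = (-1) ^ (k + 1) * ∑ a ∈ HasAntidiagonal.antidiagonal k with a.1 < k,
      (-1) ^ a.1 * s.esymm a.1 * (s.map (· ^ a.2)).sum := by
  obtain ⟨l, rfl⟩ : ∃ l : List R, (l : Multiset R) = s := ⟨s.toList, s.coe_toList⟩
  have h := congrArg (MvPolynomial.aeval l.get) (MvPolynomial.mul_esymm_eq_sum (Fin l.length) R k)
  have hval : (univ : Finset (Fin l.length)).val.map l.get = l := by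
    rw [Fin.univ_val_map, List.ofFn_get]
  simp only [map_mul, map_sum, map_pow, map_natCast, map_neg, map_one,
    MvPolynomial.aeval_esymm_eq_multiset_esymm, hval, MvPolynomial.psum, MvPolynomial.aeval_X] at h
  convert h using 6 with a
  rw [← hval, Multiset.map_map]
  rfl

theorem Subalgebra.esymm_mem_of_sum_pow_mem {K ι : Type*} [Field K] [CharZero K]
    {S : Subalgebra K (ι → K)} (g : ι → Multiset K)
    (h : ∀ k, 0 < k → (fun i => ((g i).map (· ^ k)).sum) ∈ S) (j : ℕ) :
    (fun i => (g i).esymm j) ∈ S := by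
  induction j using Nat.strong_induction_on with
  | _ j ih =>
    rcases j.eq_zero_or_pos with rfl | hj
    · convert S.one_mem using 1
      ext i
      simp [Multiset.esymm]
    have hnewton : (fun i => (g i).esymm j) = (j : K)⁻¹ • (-1 : K) ^ (j + 1) •
        ∑ a ∈ HasAntidiagonal.antidiagonal j with a.1 < j, (-1 : K) ^ a.1 •
          ((fun i => (g i).esymm a.1) * fun i => ((g i).map (· ^ a.2)).sum) := by
      ext i
      have := (g i).mul_esymm_eq_sum j
      have hj' : (j : K) ≠ 0 := Nat.cast_ne_zero.2 hj.ne'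
      simp only [Pi.smul_apply, Finset.sum_apply, Pi.mul_apply, smul_eq_mul, ← mul_assoc, ← this]
      field_simp
    rw [hnewton]
    refine S.smul_mem (S.smul_mem (S.sum_mem fun a ha => S.smul_mem (S.mul_mem ?_ ?_) _) _) _
    all_goals simp only [mem_filter, HasAntidiagonal.mem_antidiagonal] at ha
    · exact ih a.1 ha.2
    · exact h a.2 (by omega)

def polyOn (s : Set ℕ) : Subalgebra ℚ (ℕ → ℚ) where
  carrier := {f | ∃ p : ℚ[X], ∀ n ∈ s, f n = p.eval (n : ℚ)}
  mul_mem' := by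
    rintro f g ⟨p, hp⟩ ⟨q, hq⟩
    exact ⟨p * q, fun n hn => by simp [hp n hn, hq n hn]⟩
  add_mem' := by
    rintro f g ⟨p, hp⟩ ⟨q, hq⟩
    exact ⟨p + q, fun n hn => by simp [hp n hn, hq n hn]⟩
  algebraMap_mem' a := ⟨C a, fun n _ => by simp⟩

theorem natCast_mem_polyOn (s : Set ℕ) : (fun n : ℕ => (n : ℚ)) ∈ polyOn s :=
  ⟨X, fun n _ => by simp⟩

theorem eval_comp_mem_polyOn {s : Set ℕ} {f : ℕ → ℚ} (hf : f ∈ polyOn s) (p : ℚ[X]) :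
    (fun n => p.eval (f n)) ∈ polyOn s := by
  obtain ⟨q, hq⟩ := hf
  exact ⟨p.comp q, fun n hn => by simp [hq n hn]⟩

theorem natCast_div_mem_polyOn (d r : ℕ) :
    (fun n : ℕ => ((n / d : ℕ) : ℚ)) ∈ polyOn {n | n % d = r} := by
  refine ⟨C (d : ℚ)⁻¹ * (X - C (r : ℚ)), fun n (hn : n % d = r) => ?_⟩
  have h : ((d * (n / d) + n % d : ℕ) : ℚ) = n := by rw [Nat.div_add_mod]
  rcases d.eq_zero_or_pos with rfl | hd
  · simp
  simp only [eval_mul, eval_C, eval_sub, eval_X, ← hn, ← h]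
  push_cast
  field_simp
  ring

theorem sum_range_eval_mem_polyOn {s : Set ℕ} {g : ℕ → ℕ}
    (hg : (fun n => (g n : ℚ)) ∈ polyOn s) (p : ℚ[X]) :
    (fun n => ∑ l ∈ range (g n), p.eval (l : ℚ)) ∈ polyOn s := by
  induction p using Polynomial.induction_on' with
  | add p q hp hq =>
    convert add_mem hp hq using 1
    ext n
    simp [sum_add_distrib]
  | monomial k a =>
    have faulhaber (m : ℕ) : ∑ l ∈ range m, (l : ℚ) ^ k =
        (k + 1 : ℚ)⁻¹ * ((Polynomial.bernoulli (k + 1)).eval (m : ℚ) -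
          _root_.bernoulli (k + 1)) := by
      rw [← sum_range_pow_eq_bernoulli_sub]
      field_simp
    have := eval_comp_mem_polyOn hg
      (C (a * (k + 1 : ℚ)⁻¹) * (Polynomial.bernoulli (k + 1) - C (_root_.bernoulli (k + 1))))
    simpa [faulhaber, ← Finset.mul_sum, mul_assoc] using this

theorem board_ordConnected (m n : ℕ) : (board m n : Set (ℤ × ℤ)).OrdConnected := by
  rw [board, coe_product, coe_Icc, coe_Icc, Set.Icc_prod_Icc]
  exact Set.ordConnected_Icc

theorem card_board_filter_add_mem (c d m n l : ℕ) :
    #{P ∈ board m n | P + (l : ℤ) • ((c : ℤ), (d : ℤ)) ∈ board m n} =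
      (m - l * c) * (n - l * d) := by
  have : {P ∈ board m n | P + (l : ℤ) • ((c : ℤ), (d : ℤ)) ∈ board m n} =
      Icc 1 ((m : ℤ) - l * c) ×ˢ Icc 1 ((n : ℤ) - l * d) := by
    ext ⟨x, y⟩
    simp only [board, mem_filter, mem_product, mem_Icc, Prod.smul_mk, Prod.mk_add_mk, smul_eq_mul]
    have : 0 ≤ (l : ℤ) * c := by positivity
    have : 0 ≤ (l : ℤ) * d := by positivity
    constructor
    · rintro ⟨⟨⟨h1, -⟩, h3, -⟩, ⟨-, h6⟩, -, h8⟩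
      exact ⟨⟨h1, by linarith⟩, h3, by linarith⟩
    · rintro ⟨⟨h1, h2⟩, h3, h4⟩
      refine ⟨⟨⟨h1, ?_⟩, h3, ?_⟩, ⟨?_, ?_⟩, ?_, ?_⟩ <;> linarith
  rw [this, card_product, Int.card_Icc, Int.card_Icc]
  congr 1 <;> omega

theorem sum_map_lineSizes_tsub {c d : ℕ} (hcop : Nat.Coprime c d) (m n l : ℕ) :
    ((lineSizes c d m n).map (· - l)).sum = (m - l * c) * (n - l * d) := by
  set v : ℤ × ℤ := ((c : ℤ), (d : ℤ))
  have hv0 : 0 ≤ v := ⟨Int.natCast_nonneg c, Int.natCast_nonneg d⟩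
  have hv : v ≠ 0 := by
    intro h
    obtain ⟨rfl, rfl⟩ : c = 0 ∧ d = 0 := by simpa [v, Prod.ext_iff] using h
    simp at hcop
  have hline (P Q : ℤ × ℤ) :=
    (Nat.isCoprime_iff_coprime.2 hcop).mul_fst_sub_mul_snd_eq_iff (P := P) (Q := Q)
  rw [lineSizes, Multiset.map_map]
  calc ∑ b ∈ (board m n).image (fun p => (d : ℤ) * p.1 - (c : ℤ) * p.2),
        (#{P ∈ board m n | (d : ℤ) * P.1 - (c : ℤ) * P.2 = b} - l)
      = ∑ b ∈ (board m n).image (fun p => (d : ℤ) * p.1 - (c : ℤ) * p.2),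
        #{P ∈ board m n | (d : ℤ) * P.1 - (c : ℤ) * P.2 = b ∧ P + (l : ℤ) • v ∈ board m n} := by
        refine sum_congr rfl fun b hb => ?_
        obtain ⟨P₀, -, rfl⟩ := mem_image.1 hb
        exact (card_filter_add_smul_mem (board_ordConnected m n) hv0 hv P₀ _
          (fun P => hline P P₀) l).symm
    _ = #{P ∈ board m n | P + (l : ℤ) • v ∈ board m n} := by
        rw [card_eq_sum_card_fiberwise (f := fun p => (d : ℤ) * p.1 - (c : ℤ) * p.2)
          (t := (board m n).image _) fun P hP => mem_image_of_mem _ (mem_filter.1 hP).1]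
        simp only [filter_filter, and_comm]
    _ = (m - l * c) * (n - l * d) := card_board_filter_add_mem c d m n l

theorem sum_map_pow_lineSizes {c d : ℕ} (hcd : c ≤ d) (hcop : Nat.Coprime c d) (hd : 0 < d)
    {k : ℕ} (hk : 0 < k) (n : ℕ) :
    ((lineSizes c d n n).map fun s : ℕ => (s : ℚ) ^ k).sum =
      ∑ l ∈ range (n / d),
          (((l : ℚ) + 1) ^ k - (l : ℚ) ^ k) * ((c + d) * n - c * d - 2 * c * d * l) +
        ((((n / d : ℕ) : ℚ) + 1) ^ k - ((n / d : ℕ) : ℚ) ^ k) *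
          ((n - c * (n / d : ℕ)) * (n - d * (n / d : ℕ))) := by
  have hlt : n < (n / d + 1) * d := mul_comm d _ ▸ Nat.lt_mul_div_succ n hd
  have hM : ((lineSizes c d n n).map (· - (n / d + 1))).sum = 0 := by
    rw [sum_map_lineSizes_tsub hcop, Nat.sub_eq_zero_of_le (n := n) hlt.le, mul_zero]
  rw [Multiset.sum_map_eq_sum_range_mul_tsub _ _ (by simp [hk.ne']) hM, sum_range_succ]
  simp only [sum_map_lineSizes_tsub hcop]
  congr 1
  · refine sum_congr rfl fun l hl => ?_
    have hld : (l + 1) * d ≤ n :=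
      (Nat.mul_le_mul_right d (mem_range.1 hl)).trans (Nat.div_mul_le_self n d)
    have hlc : (l + 1) * c ≤ (l + 1) * d := Nat.mul_le_mul_left _ hcd
    rw [Nat.cast_mul, Nat.cast_mul, Nat.cast_sub (by nlinarith), Nat.cast_sub (by nlinarith),
      Nat.cast_sub (by omega), Nat.cast_sub hld]
    push_cast
    ring
  · have hmd : n / d * d ≤ n := Nat.div_mul_le_self n d
    have hmc : n / d * c ≤ n / d * d := Nat.mul_le_mul_left _ hcd
    rw [Nat.sub_eq_zero_of_le (n := n) hlt.le, mul_zero, Nat.cast_zero, sub_zero, Nat.cast_mul,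
      Nat.cast_sub hmd, Nat.cast_sub (hmc.trans hmd)]
    push_cast
    ring

theorem sum_map_pow_lineSizes_mem_polyOn {c d : ℕ} (hcd : c ≤ d) (hcop : Nat.Coprime c d)
    (hd : 0 < d) {k : ℕ} (hk : 0 < k) (r : ℕ) :
    (fun n => ((lineSizes c d n n).map fun s : ℕ => (s : ℚ) ^ k).sum) ∈
      polyOn {n | n % d = r} := by
  set T : ℚ[X] := (X + 1) ^ k - X ^ k
  set N : ℕ → ℚ := fun n => n
  set Q : ℕ → ℚ := fun n => ((n / d : ℕ) : ℚ)
  have hformula : (fun n => ((lineSizes c d n n).map fun s : ℕ => (s : ℚ) ^ k).sum) =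
      ((c + d : ℚ) • N - algebraMap ℚ _ (c * d)) * (fun n => ∑ l ∈ range (n / d), T.eval (l : ℚ)) -
        (2 * c * d : ℚ) • (fun n => ∑ l ∈ range (n / d), (X * T).eval (l : ℚ)) +
        (fun n => T.eval (Q n)) * ((N - (c : ℚ) • Q) * (N - (d : ℚ) • Q)) := by
    ext n
    simp only [sum_map_pow_lineSizes hcd hcop hd hk, Pi.add_apply, Pi.sub_apply, Pi.mul_apply,
      Pi.smul_apply, smul_eq_mul, Pi.algebraMap_apply, Algebra.algebraMap_self, RingHom.id_apply,
      N, Q, T, mul_sum, ← sum_sub_distrib, eval_mul, eval_sub, eval_pow, eval_add, eval_X, eval_one]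
    congr 1
    refine sum_congr rfl fun l _ => ?_
    ring
  have hN := natCast_mem_polyOn {n | n % d = r}
  have hQ := natCast_div_mem_polyOn d r
  rw [hformula]
  refine add_mem (sub_mem (mul_mem ?_ (sum_range_eval_mem_polyOn hQ T))
    (Subalgebra.smul_mem _ (sum_range_eval_mem_polyOn hQ _) _)) (mul_mem (eval_comp_mem_polyOn hQ T)
    (mul_mem (sub_mem hN (Subalgebra.smul_mem _ hQ _)) (sub_mem hN (Subalgebra.smul_mem _ hQ _))))
  exact sub_mem (Subalgebra.smul_mem _ hN _) (Subalgebra.algebraMap_mem _ _)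

theorem one_move_rider_period_general (c d q : ℕ) (hcd : c ≤ d)
    (hcop : Nat.Coprime c d) :
    ∃ P : ℕ → Polynomial ℚ, ∀ n : ℕ, q * d ≤ n →
      (((lineSizes c d n n).esymm q : ℕ) : ℚ) = (P (n % d)).eval (n : ℚ) := by
  have hd : 0 < d := Nat.pos_of_ne_zero (by rintro rfl; simp_all)
  have hmem (r : ℕ) :
      (fun n => (((lineSizes c d n n).esymm q : ℕ) : ℚ)) ∈ polyOn {n | n % d = r} := by
    have := Subalgebra.esymm_mem_of_sum_pow_mem
      (fun n => (lineSizes c d n n).map (Nat.cast : ℕ → ℚ)) (fun k hk => by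
        simpa [Multiset.map_map] using sum_map_pow_lineSizes_mem_polyOn hcd hcop hd hk r) q
    convert this using 2 with n
    exact (Multiset.esymm_map_ringHom (Nat.castRingHom ℚ) _ q).symm
  choose P hP using hmem
  exact ⟨P, fun n _ => hP (n % d) n rfl⟩

/-- Theorem 3.2: for a one-move rider with basic move `(c,d)`, `0 < c ≤ d`,
`gcd(c,d) = 1`, the counting function `u(q; n) = e_q(L^{d/c}(n,n))` of nonattacking
configurations on the `n × n` board is, for `n ≥ qd`, a quasipolynomial in `n` whose
coefficients are periodic with period dividing `d`: for each residue class of `n`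
modulo `d` it is given by a single polynomial. -/
theorem one_move_rider_period (c d q : ℕ) (hc : 0 < c) (hcd : c ≤ d)
    (hcop : Nat.Coprime c d) (hq : 0 < q) :
    ∃ P : ℕ → Polynomial ℚ, ∀ n : ℕ, q * d ≤ n →
      (((lineSizes c d n n).esymm q : ℕ) : ℚ) = (P (n % d)).eval (n : ℚ) :=
  one_move_rider_period_general c d q hcd hcop
end

section
/- Let c, d be coprime positive integers, m, n positive integers with 0 < ⌊n/d⌋ ≤ ⌊m/c⌋, n̄ = n mod d, and q a positive integer. The number of nonattacking configurations of q one-move riders with move (c,d) on the m×n board equals the sum over tuples of nonnegative integers (k, j, x₁,…,x_{2cd}) with k + j + x₁ + ⋯ + x_{2cd} = q of C((d-n̄)(m-c⌊n/d⌋)+c(n̄+d), j)·⌊n/d⌋^j · C(n̄(m-c⌊n/d⌋), k)·(⌊n/d⌋+1)^k · Π_{i=1}^{2cd} [⌊n/d⌋ brack ⌊n/d⌋ - xᵢ], where [· brack ·] denotes unsigned Stirling numbers of the first kind. -/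
/-- The number of nonattacking placements of `q` one-move riders with move `(c,d)`
on the `m × n` board: two pieces attack iff they lie on a common line of slope `d/c`,
i.e. iff they share the invariant `p ↦ d·p₁ - c·p₂`. -/
noncomputable def nonattack (c d m n q : ℕ) : ℕ :=
  (((board m n).powersetCard q).filter
    (fun S => ∀ p ∈ S, ∀ p' ∈ S,
      (d : ℤ) * p.1 - (c : ℤ) * p.2 = (d : ℤ) * p'.1 - (c : ℤ) * p'.2 → p = p')).card

/-- Unsigned Stirling numbers of the first kind. -/
def stirling1 : ℕ → ℕ → ℕ
  | 0, 0 => 1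
  | 0, _ + 1 => 0
  | _ + 1, 0 => 0
  | n + 1, k + 1 => n * stirling1 n (k + 1) + stirling1 n k

/-!
Two riders attack each other iff they lie on a common line `d x - c y = v`, so a nonattacking
configuration of `q` riders is a choice of `q` distinct lines and of one point on each: their number
is the `q`-th elementary symmetric function of the line sizes `N_v`, i.e. the coefficient of `X ^ q`
in `∏ v, (1 + N_v X)`.

As `c` and `d` are coprime and the board is a box, each line is an arithmetic progression with step
`(c, d)`. Hence the number of points `p` such that `p + e (c, d)` is still on the board equals both
`(m - e c) (n - e d)` and `∑ v, (N_v - e)₊`, and second differences in `e` count the lines of each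
size: `2cd` lines of each size `1, …, t - 1`, `(d - r)(m - c t) + c (r + d)` of size `t`,
`r (m - c t)` of size `t + 1` and none longer, where `t = n / d` and `r = n % d`. The product
then splits into three kinds of factors, and `∏_{s < t} (1 + s X)` has the Stirling numbers
`[t, t - x]` as coefficients.
-/

open Polynomial Finset

theorem Polynomial.coeff_prod {ι R : Type*} [CommSemiring R] [DecidableEq ι] (s : Finset ι)
    (p : ι → R[X]) (q : ℕ) :
    (∏ i ∈ s, p i).coeff q = ∑ f ∈ s.piAntidiag q, ∏ i ∈ s, (p i).coeff (f i) := by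
  rw [← coeff_coe, ← Polynomial.coeToPowerSeries.ringHom_apply, map_prod,
    PowerSeries.coeff_prod, finsuppAntidiag, sum_map,
    ← sum_attach _ fun f : ι → ℕ => ∏ i ∈ s, (p i).coeff (f i)]
  simp [coeff_coe]

theorem Polynomial.coeff_prod_one_add_C_mul_X {ι R : Type*} [CommSemiring R] (s : Finset ι)
    (a : ι → R) (q : ℕ) :
    (∏ i ∈ s, (1 + C (a i) * X)).coeff q = ∑ T ∈ s.powersetCard q, ∏ i ∈ T, a i := by
  classical
  simp_rw [add_comm (1 : R[X]), prod_add, prod_const_one, mul_one, prod_mul_distrib, ← map_prod,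
    prod_const, finsetSum_coeff, coeff_C_mul_X_pow, powersetCard_eq_filter, sum_filter, eq_comm]

theorem Polynomial.coeff_one_add_C_mul_X_pow {R : Type*} [CommSemiring R] (a : R) (A q : ℕ) :
    ((1 + C a * X) ^ A).coeff q = A.choose q * a ^ q := by
  rw [← card_range A, ← prod_const, coeff_prod_one_add_C_mul_X, card_range]
  simp_rw [prod_const]
  rw [sum_congr rfl fun T hT => by rw [(mem_powersetCard.1 hT).2], sum_const, card_powersetCard,
    card_range, nsmul_eq_mul]

theorem stirling1_eq_stirlingFirst : stirling1 = Nat.stirlingFirst := by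
  funext n k
  induction n generalizing k with
  | zero => cases k <;> rfl
  | succ n ih => cases k <;> simp [stirling1, Nat.stirlingFirst_succ_succ, ih]

theorem Polynomial.coeff_prod_range_one_add_C_mul_X {t : ℕ} (ht : 0 < t) (x : ℕ) :
    (∏ i ∈ range t, (1 + C i * X)).coeff x = Nat.stirlingFirst t (t - x) := by
  induction t, ht using Nat.le_induction generalizing x with
  | base => rcases x with _ | _ <;> simp [coeff_one, Nat.stirlingFirst_self]
  | succ t ht ih =>
    rw [prod_range_succ, mul_add, mul_one, coeff_add, ← mul_assoc, mul_comm _ (C _), mul_assoc,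
      coeff_C_mul, ih]
    rcases x with _ | x
    · simp [Nat.stirlingFirst_self]
    · rw [coeff_mul_X, ih]
      rcases Nat.lt_or_ge x t with hx | hx
      · rw [show t + 1 - (x + 1) = t - x by omega, show t - x = (t - (x + 1)) + 1 by omega,
          Nat.stirlingFirst_succ_succ]
        ring
      · obtain ⟨s, rfl⟩ := Nat.exists_eq_add_of_le' ht
        simp [show s + 1 + 1 - (x + 1) = 0 by omega, show s + 1 - (x + 1) = 0 by omega,
          show s + 1 - x = 0 by omega]

section Transversals

variable {α β : Type*} [DecidableEq α] [DecidableEq β] {s : Finset α} {f : α → β}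

theorem image_mem_filter_injOn_of_mem_pi {T : Finset β} {g : ∀ b ∈ T, α}
    (hg : g ∈ T.pi fun b => {a ∈ s | f a = b}) :
    T.attach.image (fun b : T => g b.1 b.2)
      ∈ {S ∈ s.powerset | (∀ a ∈ S, ∀ a' ∈ S, f a = f a' → a = a') ∧ S.image f = T} := by
  simp only [mem_pi, mem_filter] at hg
  simp only [mem_filter, mem_powerset]
  refine ⟨fun a ha => ?_, fun a ha a' ha' h => ?_, ?_⟩
  · obtain ⟨b, -, rfl⟩ := mem_image.1 ha
    exact (hg b b.2).1
  · obtain ⟨b, -, rfl⟩ := mem_image.1 ha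
    obtain ⟨b', -, rfl⟩ := mem_image.1 ha'
    rw [(hg b b.2).2, (hg b' b'.2).2] at h
    rw [Subtype.ext h]
  · ext b
    simp only [mem_image, mem_attach, true_and]
    constructor
    · rintro ⟨_, ⟨b', rfl⟩, rfl⟩
      rw [(hg b' b'.2).2]
      exact b'.2
    · intro hb
      exact ⟨_, ⟨⟨b, hb⟩, rfl⟩, (hg b hb).2⟩

theorem card_filter_injOn_image_eq (s : Finset α) (f : α → β) (T : Finset β) :
    #{S ∈ s.powerset | (∀ a ∈ S, ∀ a' ∈ S, f a = f a' → a = a') ∧ S.image f = T}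
      = ∏ b ∈ T, #{a ∈ s | f a = b} := by
  set I := {S ∈ s.powerset | (∀ a ∈ S, ∀ a' ∈ S, f a = f a' → a = a') ∧ S.image f = T}
  have hI : ∀ S ∈ I, S ⊆ s ∧ (∀ a ∈ S, ∀ a' ∈ S, f a = f a' → a = a') ∧ S.image f = T := by
    simp [I]
  have hpre : ∀ S ∈ I, ∀ b ∈ T, ∃ a ∈ S, f a = b := fun S hS b hb =>
    mem_image.1 ((hI S hS).2.2 ▸ hb)
  rw [← card_pi]
  refine card_bij' (fun S hS b hb => (hpre S hS b hb).choose)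
    (fun g _ => T.attach.image fun b : T => g b.1 b.2) ?_
    (fun _ hg => image_mem_filter_injOn_of_mem_pi hg) ?_ ?_
  · intro S hS
    simp only [mem_pi, mem_filter]
    intro b hb
    obtain ⟨ha, hfa⟩ := (hpre S hS b hb).choose_spec
    exact ⟨(hI S hS).1 ha, hfa⟩
  · intro S hS
    ext a
    simp only [mem_image, mem_attach, true_and]
    constructor
    · rintro ⟨b, rfl⟩
      exact (hpre S hS b b.2).choose_spec.1
    · intro ha
      have hb : f a ∈ T := (hI S hS).2.2 ▸ mem_image_of_mem f ha
      obtain ⟨ha', hfa'⟩ := (hpre S hS (f a) hb).choose_spec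
      exact ⟨⟨f a, hb⟩, (hI S hS).2.1 _ ha' a ha hfa'⟩
  · intro g hg
    simp only [mem_pi, mem_filter] at hg
    funext b hb
    generalize_proofs _ hex
    obtain ⟨ha, hfa⟩ := hex.choose_spec
    obtain ⟨⟨b', hb'⟩, -, hgb'⟩ := mem_image.1 ha
    rw [← hgb', (hg b' hb').2] at hfa
    subst hfa
    exact hgb'.symm

theorem card_powersetCard_filter_injOn (s : Finset α) (f : α → β) (q : ℕ) :
    #{S ∈ s.powersetCard q | ∀ a ∈ S, ∀ a' ∈ S, f a = f a' → a = a'}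
      = ∑ T ∈ (s.image f).powersetCard q, ∏ b ∈ T, #{a ∈ s | f a = b} := by
  have hmaps : ∀ S ∈ {S ∈ s.powersetCard q | ∀ a ∈ S, ∀ a' ∈ S, f a = f a' → a = a'},
      S.image f ∈ (s.image f).powersetCard q := by
    simp only [mem_filter, mem_powersetCard]
    exact fun S ⟨⟨hSs, hSq⟩, hinj⟩ =>
      ⟨image_subset_image hSs,
        (card_image_of_injOn fun a ha a' ha' => hinj a ha a' ha').trans hSq⟩
  rw [card_eq_sum_card_fiberwise hmaps]
  refine sum_congr rfl fun T hT => ?_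
  rw [← card_filter_injOn_image_eq, filter_filter]
  congr 1
  ext S
  simp only [mem_filter, mem_powersetCard, mem_powerset]
  constructor
  · exact fun ⟨⟨hSs, _⟩, hinj, hST⟩ => ⟨hSs, hinj, hST⟩
  · rintro ⟨hSs, hinj, rfl⟩
    refine ⟨⟨hSs, ?_⟩, hinj, rfl⟩
    rw [← (mem_powersetCard.1 hT).2, card_image_of_injOn fun a ha a' ha' => hinj a ha a' ha']

end Transversals

theorem Finset.card_filter_add_mem_of_ordConnected_s12 {K : Finset ℤ} (hK : (K : Set ℤ).OrdConnected)
    (j : ℕ) : #{k ∈ K | k + (j : ℤ) ∈ K} = #K - j := by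
  rcases K.eq_empty_or_nonempty with rfl | hne
  · simp
  obtain ⟨a, b, rfl⟩ : ∃ a b, K = Icc a b := by
    refine ⟨K.min' hne, K.max' hne, Subset.antisymm (fun k hk => ?_) fun k hk => ?_⟩
    · exact mem_Icc.2 ⟨min'_le _ _ hk, le_max' _ _ hk⟩
    · exact hK.out (min'_mem _ _) (max'_mem _ _) (mem_Icc.1 hk)
  have : {k ∈ Icc a b | k + (j : ℤ) ∈ Icc a b} = Icc a (b - j) := by
    ext k
    simp only [mem_filter, mem_Icc]
    omega
  rw [this, Int.card_Icc, Int.card_Icc]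
  omega

theorem Finset.natCast_card_filter_eq_add_one {ι : Type*} (s : Finset ι) (N : ι → ℕ) (k : ℕ) :
    (#{i ∈ s | N i = k + 1} : ℤ)
      = (∑ i ∈ s, (N i - k) : ℕ) - 2 * (∑ i ∈ s, (N i - (k + 1)) : ℕ)
        + (∑ i ∈ s, (N i - (k + 2)) : ℕ) := by
  rw [card_filter]
  push_cast
  rw [mul_sum, ← sum_sub_distrib, ← sum_add_distrib]
  refine sum_congr rfl fun i _ => ?_
  -- in truncated subtraction, `(N - k) - 2 (N - k - 1) + (N - k - 2)` is `1` if `N = k + 1`,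
  -- and `0` otherwise
  split_ifs <;> omega

def lineIndex (c d : ℕ) (p : ℤ × ℤ) : ℤ := d * p.1 - c * p.2

noncomputable def lineValues (c d m n : ℕ) : Finset ℤ := (board m n).image (lineIndex c d)

noncomputable def lineSize (c d m n : ℕ) (v : ℤ) : ℕ := #{p ∈ board m n | lineIndex c d p = v}

noncomputable def lineSizeCount (c d m n s : ℕ) : ℕ :=
  #{v ∈ lineValues c d m n | lineSize c d m n v = s}

section Lines

variable {c d m n : ℕ}

theorem lineIndex_eq_iff (hc : c ≠ 0) (hcd : c.Coprime d) {p q : ℤ × ℤ} :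
    lineIndex c d q = lineIndex c d p ↔ ∃ k : ℤ, q = p + k • ((c : ℤ), (d : ℤ)) := by
  constructor
  · intro h
    have key : (q.1 - p.1) * d = c * (q.2 - p.2) := by
      unfold lineIndex at h
      linear_combination h
    obtain ⟨k, hk⟩ := (Nat.isCoprime_iff_coprime.2 hcd).dvd_of_dvd_mul_right ⟨_, key⟩
    refine ⟨k, Prod.ext ?_ ?_⟩
    · simp only [Prod.fst_add, Prod.smul_fst, smul_eq_mul]; linear_combination hk
    · have hc' : (c : ℤ) ≠ 0 := by exact_mod_cast hc
      simp only [Prod.snd_add, Prod.smul_snd, smul_eq_mul]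
      refine mul_left_cancel₀ hc' ?_
      linear_combination -key + d * hk
  · rintro ⟨k, rfl⟩
    simp only [lineIndex, Prod.fst_add, Prod.smul_fst, Prod.snd_add, Prod.smul_snd, smul_eq_mul]
    ring

theorem ordConnected_setOf_add_smul_mem_board (p : ℤ × ℤ) :
    {k : ℤ | p + k • ((c : ℤ), (d : ℤ)) ∈ board m n}.OrdConnected := by
  refine ⟨fun a ha b hb k hk => ?_⟩
  simp only [Set.mem_ofPred_eq, board, mem_product, mem_Icc, Prod.fst_add,
    Prod.smul_fst, Prod.snd_add, Prod.smul_snd, smul_eq_mul] at ha hb ⊢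
  have h1 : a * (c : ℤ) ≤ k * c := mul_le_mul_of_nonneg_right hk.1 (by positivity)
  have h2 : k * (c : ℤ) ≤ b * c := mul_le_mul_of_nonneg_right hk.2 (by positivity)
  have h3 : a * (d : ℤ) ≤ k * d := mul_le_mul_of_nonneg_right hk.1 (by positivity)
  have h4 : k * (d : ℤ) ≤ b * d := mul_le_mul_of_nonneg_right hk.2 (by positivity)
  omega

theorem card_filter_lineIndex_add_mem (hc : c ≠ 0) (hcd : c.Coprime d) (v : ℤ) (e : ℕ) :
    #{p ∈ board m n | lineIndex c d p = v ∧ p + (e : ℤ) • ((c : ℤ), (d : ℤ)) ∈ board m n}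
      = lineSize c d m n v - e := by
  rcases ({p ∈ board m n | lineIndex c d p = v} : Finset _).eq_empty_or_nonempty
    with h | ⟨p, hp⟩
  · rw [lineSize, h, card_empty, Nat.zero_sub, card_eq_zero, ← subset_empty, ← h]
    exact monotone_filter_right _ fun _ _ => And.left
  rw [mem_filter] at hp
  set g : ℤ → ℤ × ℤ := fun k => p + k • ((c : ℤ), (d : ℤ))
  have hg : g.Injective := fun k l hkl => by
    have := congrArg Prod.fst hkl
    simp only [g, Prod.fst_add, Prod.smul_fst, smul_eq_mul, add_right_inj] at this
    exact mul_right_cancel₀ (by exact_mod_cast hc) this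
  set K := (board m n).preimage g hg.injOn
  have hK : (K : Set ℤ).OrdConnected := by
    rw [coe_preimage]
    exact ordConnected_setOf_add_smul_mem_board p
  have hline : {q ∈ board m n | lineIndex c d q = v} = K.image g := by
    ext q
    rw [mem_filter, mem_image, ← hp.2, lineIndex_eq_iff hc hcd]
    constructor
    · rintro ⟨hq, k, rfl⟩
      exact ⟨k, mem_preimage.2 hq, rfl⟩
    · rintro ⟨k, hk, rfl⟩
      exact ⟨mem_preimage.1 hk, k, rfl⟩
  have hshift :
      {q ∈ board m n | lineIndex c d q = v ∧ q + (e : ℤ) • ((c : ℤ), (d : ℤ)) ∈ board m n}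
        = {k ∈ K | k + (e : ℤ) ∈ K}.image g := by
    rw [← filter_filter, hline, filter_image]
    congr 2
    ext k
    simp only [mem_preimage, K, g, add_smul, add_assoc]
  rw [hshift, lineSize, hline, card_image_of_injective _ hg, card_image_of_injective _ hg,
    card_filter_add_mem_of_ordConnected_s12 hK]

theorem card_filter_add_mem_board (e : ℕ) :
    #{p ∈ board m n | p + (e : ℤ) • ((c : ℤ), (d : ℤ)) ∈ board m n}
      = (m - e * c) * (n - e * d) := by
  have : {p ∈ board m n | p + (e : ℤ) • ((c : ℤ), (d : ℤ)) ∈ board m n}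
      = {x ∈ Icc 1 (m : ℤ) | x + ((e * c : ℕ) : ℤ) ∈ Icc 1 (m : ℤ)}
        ×ˢ {y ∈ Icc 1 (n : ℤ) | y + ((e * d : ℕ) : ℤ) ∈ Icc 1 (n : ℤ)} := by
    ext ⟨x, y⟩
    simp only [board, mem_filter, mem_product, Prod.mk_add_mk, Prod.smul_mk, smul_eq_mul]
    push_cast
    tauto
  rw [this, card_product, card_filter_add_mem_of_ordConnected_s12 (by simp [Set.ordConnected_Icc]),
    card_filter_add_mem_of_ordConnected_s12 (by simp [Set.ordConnected_Icc]), Int.card_Icc,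
    Int.card_Icc]
  simp

theorem sum_lineSize_tsub (hc : c ≠ 0) (hcd : c.Coprime d) (e : ℕ) :
    ∑ v ∈ lineValues c d m n, (lineSize c d m n v - e) = (m - e * c) * (n - e * d) := by
  rw [← card_filter_add_mem_board,
    card_eq_sum_card_fiberwise (f := lineIndex c d) (t := lineValues c d m n)
      fun p hp => mem_image_of_mem _ (mem_filter.1 hp).1]
  refine sum_congr rfl fun v _ => ?_
  rw [filter_filter, ← card_filter_lineIndex_add_mem hc hcd]
  simp_rw [and_comm]

theorem lineSize_le_of_le_mul (hc : c ≠ 0) (hcd : c.Coprime d) {e : ℕ} (he : n ≤ e * d) {v : ℤ}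
    (hv : v ∈ lineValues c d m n) : lineSize c d m n v ≤ e := by
  have h := sum_lineSize_tsub (m := m) (n := n) hc hcd e
  rw [Nat.sub_eq_zero_of_le he, mul_zero, sum_eq_zero_iff] at h
  exact Nat.le_of_sub_eq_zero (h v hv)

theorem natCast_lineSizeCount_succ (hc : c ≠ 0) (hcd : c.Coprime d) (k : ℕ) :
    (lineSizeCount c d m n (k + 1) : ℤ)
      = ((m - k * c) * (n - k * d) : ℕ) - 2 * ((m - (k + 1) * c) * (n - (k + 1) * d) : ℕ)
        + ((m - (k + 2) * c) * (n - (k + 2) * d) : ℕ) := by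
  rw [lineSizeCount, natCast_card_filter_eq_add_one, sum_lineSize_tsub hc hcd,
    sum_lineSize_tsub hc hcd, sum_lineSize_tsub hc hcd]

theorem natCast_tsub_mul_tsub {t j : ℕ} (hm : c * t ≤ m) (hn : d * t ≤ n) (hj : j ≤ t) :
    (((m - j * c) * (n - j * d) : ℕ) : ℤ) = (m - j * c) * (n - j * d) := by
  have hjc : j * c ≤ m := le_trans (by rw [mul_comm]; exact Nat.mul_le_mul_left c hj) hm
  have hjd : j * d ≤ n := le_trans (by rw [mul_comm]; exact Nat.mul_le_mul_left d hj) hn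
  rw [Nat.cast_mul, Nat.cast_sub hjc, Nat.cast_sub hjd, Nat.cast_mul, Nat.cast_mul]

theorem tsub_mul_tsub_eq_zero {j : ℕ} (hn : n ≤ j * d) : (m - j * c) * (n - j * d) = 0 := by
  rw [Nat.sub_eq_zero_of_le hn, mul_zero]

theorem lineSizeCount_of_lt (hc : c ≠ 0) (hcd : c.Coprime d) {t : ℕ} (hm : c * t ≤ m)
    (hn : d * t ≤ n) {s : ℕ} (hs : 0 < s) (hst : s < t) :
    lineSizeCount c d m n s = 2 * c * d := by
  obtain ⟨k, rfl⟩ : ∃ k, s = k + 1 := ⟨s - 1, by omega⟩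
  have h := natCast_lineSizeCount_succ (m := m) (n := n) hc hcd k
  rw [natCast_tsub_mul_tsub hm hn (by omega), natCast_tsub_mul_tsub hm hn (by omega),
    natCast_tsub_mul_tsub hm hn (by omega)] at h
  zify
  rw [h]
  push_cast
  ring

theorem lineSizeCount_self (hc : c ≠ 0) (hcd : c.Coprime d) {t r : ℕ} (hn : n = d * t + r)
    (hr : r < d) (hm : c * t ≤ m) (ht : 0 < t) :
    lineSizeCount c d m n t = (d - r) * (m - c * t) + c * (r + d) := by
  obtain ⟨k, rfl⟩ : ∃ k, t = k + 1 := ⟨t - 1, by omega⟩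
  have h := natCast_lineSizeCount_succ (m := m) (n := n) hc hcd k
  rw [natCast_tsub_mul_tsub hm (by omega) (by omega), natCast_tsub_mul_tsub hm (by omega) le_rfl,
    tsub_mul_tsub_eq_zero (by rw [hn]; nlinarith)] at h
  zify [hr.le, hm]
  rw [h, hn]
  push_cast
  ring

theorem lineSizeCount_succ_self (hc : c ≠ 0) (hcd : c.Coprime d) {t r : ℕ} (hn : n = d * t + r)
    (hr : r < d) (hm : c * t ≤ m) :
    lineSizeCount c d m n (t + 1) = r * (m - c * t) := by
  have h := natCast_lineSizeCount_succ (m := m) (n := n) hc hcd t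
  rw [natCast_tsub_mul_tsub hm (by omega) le_rfl, tsub_mul_tsub_eq_zero (by rw [hn]; nlinarith),
    tsub_mul_tsub_eq_zero (by rw [hn]; nlinarith)] at h
  zify [hm]
  rw [h, hn]
  push_cast
  ring

theorem nonattack_eq_sum_prod_lineSize (q : ℕ) :
    nonattack c d m n q
      = ∑ T ∈ (lineValues c d m n).powersetCard q, ∏ v ∈ T, lineSize c d m n v :=
  card_powersetCard_filter_injOn _ _ _

theorem prod_lineValues_one_add_C_mul_X (hc : c ≠ 0) (hcd : c.Coprime d) {t r : ℕ}
    (hn : n = d * t + r) (hr : r < d) (hm : c * t ≤ m) (ht : 0 < t) :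
    ∏ v ∈ lineValues c d m n, (1 + C (lineSize c d m n v) * X : ℕ[X])
      = (∏ s ∈ range t, (1 + C s * X)) ^ (2 * c * d)
        * (1 + C t * X) ^ ((d - r) * (m - c * t) + c * (r + d))
        * (1 + C (t + 1) * X) ^ (r * (m - c * t)) := by
  have hmaps : ∀ v ∈ lineValues c d m n, lineSize c d m n v ∈ range (t + 2) := fun v hv =>
    mem_range.2 (Nat.lt_succ_of_le (lineSize_le_of_le_mul hc hcd (by rw [hn]; nlinarith) hv))
  rw [← prod_fiberwise_of_maps_to hmaps]
  have hfiber : ∀ s ∈ range (t + 2),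
      ∏ v ∈ lineValues c d m n with lineSize c d m n v = s,
          (1 + C (lineSize c d m n v) * X : ℕ[X])
        = (1 + C s * X) ^ lineSizeCount c d m n s := fun s _ => by
    rw [lineSizeCount, ← prod_const]
    exact prod_congr rfl fun v hv => by rw [(mem_filter.1 hv).2]
  rw [prod_congr rfl hfiber, prod_range_succ, prod_range_succ,
    lineSizeCount_self hc hcd hn hr hm ht, lineSizeCount_succ_self hc hcd hn hr hm, ← prod_pow]
  congr 2
  refine prod_congr rfl fun s hs => ?_
  rcases Nat.eq_zero_or_pos s with rfl | hs0
  · simp -- the factor `1 + 0 X` is `1`, whatever the number of lines of size `0`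
  · rw [lineSizeCount_of_lt hc hcd hm (by omega) hs0 (mem_range.1 hs)]

end Lines

/-- The tuple `(j, k, x₁, …, x_{2cd})` is `f` with `f 0 = j`, `f 1 = k` and `f (i + 2) = xᵢ`. -/
theorem one_move_rider_count_general (c d m n t r q : ℕ) (hcd : Nat.Coprime c d) (ht : t = n / d)
    (hr : r = n % d) (h1 : 0 < n / d) (h2 : n / d ≤ m / c) :
    nonattack c d m n q
      = ∑ f ∈ Finset.Nat.antidiagonalTuple (2 * c * d + 2) q,
          Nat.choose ((d - r) * (m - c * t) + c * (r + d)) (f 0) * t ^ (f 0) *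
            (Nat.choose (r * (m - c * t)) (f 1) * (t + 1) ^ (f 1)) *
            ∏ i : Fin (2 * c * d), stirling1 t (t - f i.succ.succ) := by
  have hd : 0 < d := Nat.pos_of_ne_zero fun h => by simp [h] at h1
  have hc : c ≠ 0 := by
    rintro rfl
    rw [Nat.div_zero] at h2
    omega
  have hn : n = d * t + r := by rw [ht, hr, Nat.div_add_mod]
  have hm : c * t ≤ m := ht ▸ (Nat.mul_le_mul_left c h2).trans (Nat.mul_div_le m c)
  have ht0 : 0 < t := ht ▸ h1
  set H : ℕ[X] := ∏ s ∈ range t, (1 + C s * X)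
  set A : ℕ[X] := (1 + C t * X) ^ ((d - r) * (m - c * t) + c * (r + d))
  set B : ℕ[X] := (1 + C (t + 1) * X) ^ (r * (m - c * t))
  have hprod : H ^ (2 * c * d) * A * B
      = ∏ i, (Fin.cons A (Fin.cons B fun _ => H) : Fin (2 * c * d + 2) → ℕ[X]) i := by
    rw [Fin.prod_cons, Fin.prod_cons, Fin.prod_const]
    ring
  rw [nonattack_eq_sum_prod_lineSize, ← coeff_prod_one_add_C_mul_X,
    prod_lineValues_one_add_C_mul_X hc hcd hn (hr ▸ Nat.mod_lt n hd) hm ht0, hprod,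
    coeff_prod, piAntidiag_univ_fin_eq_antidiagonalTuple]
  refine sum_congr rfl fun f _ => ?_
  rw [Fin.prod_univ_succ, Fin.prod_univ_succ, ← mul_assoc]
  simp only [Fin.cons_zero, Fin.cons_succ, A, B, H, coeff_one_add_C_mul_X_pow,
    coeff_prod_range_one_add_C_mul_X ht0, stirling1_eq_stirlingFirst, Nat.cast_id]
  rw [Fin.succ_zero_eq_one]

/-- Theorem 3.3: the number of nonattacking configurations of `q` one-move riders
with move `(c,d)` on the `m × n` board, as a sum over tuples
`(j, k, x₁, …, x_{2cd})` of nonnegative integers summing to `q` (here encoded as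
`f : Fin (2cd+2) → ℕ` with `f 0 = j`, `f 1 = k`, `f (i+2) = xᵢ`). -/
theorem one_move_rider_count (c d m n t r q : ℕ) (hc : 0 < c) (hd : 0 < d) (hm : 0 < m)
    (hn : 0 < n) (hcd : Nat.Coprime c d) (ht : t = n / d) (hr : r = n % d)
    (h1 : 0 < n / d) (h2 : n / d ≤ m / c) (hq : 0 < q) :
    nonattack c d m n q
      = ∑ f ∈ Finset.Nat.antidiagonalTuple (2 * c * d + 2) q,
          Nat.choose ((d - r) * (m - c * t) + c * (r + d)) (f 0) * t ^ (f 0) *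
            (Nat.choose (r * (m - c * t)) (f 1) * (t + 1) ^ (f 1)) *
            ∏ i : Fin (2 * c * d), stirling1 t (t - f i.succ.succ) :=
  one_move_rider_count_general c d m n t r q hcd ht hr h1 h2
end

section
/- Let m ≥ n ≥ 1 and q ≥ 1 be integers. The number of nonattacking configurations of q semibishops (one-move riders with move (1,1)) on the m×n board equals Σ_{l=0}^{m-n+1} n^{m-n-l+1} · C(m-n+1, l) · Σ_j [n brack j]·[n brack m+n-q-j-l+1], where [· brack ·] denotes unsigned Stirling numbers of the first kind and the inner sum is over all j for which both Stirling numbers are defined (1 ≤ j ≤ m+n-q-l). -/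
/-!
A nonattacking configuration is a transversal of the diagonals `p.1 - p.2 = d`: a choice of `q`
diagonals and of one square on each. So the count is the `q`-th elementary symmetric function of
the diagonal sizes, a coefficient of `∏ d, (X + #diagonal d)` by Vieta. The sizes are `1, …, n - 1`,
each twice, and `n` with multiplicity `m - n + 1`, so `X ^ 2` times that product is
`(X + n) ^ (m - n + 1)` times the square of the rising factorial `X (X + 1) ⋯ (X + n - 1)`, whose
coefficients are the Stirling numbers of the first kind.
-/

open Polynomial Finset

section Transversals

variable {α β : Type*} [DecidableEq α] [DecidableEq β]

theorem image_attach_mem_powersetCard_injOn_image (s : Finset α) (f : α → β) {T : Finset β}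
    {q : ℕ} (hT : #T = q) {g : ∀ d ∈ T, α} (hg : ∀ d (hd : d ∈ T), g d hd ∈ s ∧ f (g d hd) = d) :
    T.attach.image (fun d => g d.1 d.2)
      ∈ {S ∈ s.powersetCard q | (∀ p ∈ S, ∀ p' ∈ S, f p = f p' → p = p') ∧ S.image f = T} := by
  have hinj : Function.Injective fun d : T => g d.1 d.2 := fun d d' h =>
    Subtype.ext <| by rw [← (hg d.1 d.2).2, ← (hg d'.1 d'.2).2]; exact congrArg f h
  simp only [mem_filter, mem_powersetCard, mem_image, mem_attach, true_and]
  refine ⟨⟨?_, by rw [card_image_of_injective _ hinj, card_attach, hT]⟩, ?_, ?_⟩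
  · intro p hp
    obtain ⟨d, -, rfl⟩ := mem_image.1 hp
    exact (hg d.1 d.2).1
  · rintro _ ⟨d, rfl⟩ _ ⟨d', rfl⟩ h
    obtain rfl : d = d' := Subtype.ext (by rwa [(hg d.1 d.2).2, (hg d'.1 d'.2).2] at h)
    rfl
  · ext d
    simp only [image_image, mem_image, mem_attach, true_and, Function.comp_apply]
    refine ⟨?_, fun hd => ⟨⟨d, hd⟩, (hg d hd).2⟩⟩
    rintro ⟨d', rfl⟩
    rw [(hg d'.1 d'.2).2]
    exact d'.2

theorem card_powersetCard_injOn_image_eq_prod (s : Finset α) (f : α → β) {T : Finset β} {q : ℕ}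
    (hT : #T = q) :
    #{S ∈ s.powersetCard q | (∀ p ∈ S, ∀ p' ∈ S, f p = f p' → p = p') ∧ S.image f = T}
      = ∏ d ∈ T, #{p ∈ s | f p = d} := by
  rw [← card_pi]
  symm
  refine card_bij (fun g _ => T.attach.image fun d => g d.1 d.2)
    (fun g hg => image_attach_mem_powersetCard_injOn_image s f hT (by simpa using hg)) ?_ ?_
  · intro g hg g' hg' h
    simp only [mem_pi, mem_filter] at hg hg'
    funext d hd
    obtain ⟨⟨d', hd'⟩, -, he⟩ :=
      mem_image.1 (h ▸ mem_image_of_mem (fun d : T => g d.1 d.2) (mem_attach T ⟨d, hd⟩))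
    obtain rfl : d' = d := by rw [← (hg' d' hd').2, he, (hg d hd).2]
    exact he.symm
  · intro S hS
    simp only [mem_filter, mem_powersetCard] at hS
    obtain ⟨⟨hsub, -⟩, hinj, rfl⟩ := hS
    have hex : ∀ d ∈ S.image f, ∃ p ∈ S, f p = d := fun d hd => mem_image.1 hd
    refine ⟨fun d hd => (hex d hd).choose, ?_, ?_⟩
    · simp only [mem_pi, mem_filter]
      exact fun d hd => ⟨hsub (hex d hd).choose_spec.1, (hex d hd).choose_spec.2⟩
    · ext p
      simp only [mem_image, mem_attach, true_and]
      refine ⟨?_, fun hp => ⟨⟨f p, mem_image_of_mem f hp⟩, ?_⟩⟩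
      · rintro ⟨⟨d, hd⟩, rfl⟩
        exact (hex d hd).choose_spec.1
      · have hspec := (hex (f p) (mem_image_of_mem f hp)).choose_spec
        exact hinj _ hspec.1 _ hp hspec.2

theorem card_powersetCard_injOn_eq_sum_prod (s : Finset α) (f : α → β) {D : Finset β}
    (hD : ∀ p ∈ s, f p ∈ D) (q : ℕ) :
    #{S ∈ s.powersetCard q | ∀ p ∈ S, ∀ p' ∈ S, f p = f p' → p = p'}
      = ∑ T ∈ D.powersetCard q, ∏ d ∈ T, #{p ∈ s | f p = d} := by
  have hmaps : ∀ S ∈ {S ∈ s.powersetCard q | ∀ p ∈ S, ∀ p' ∈ S, f p = f p' → p = p'},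
      S.image f ∈ D.powersetCard q := by
    intro S hS
    simp only [mem_filter, mem_powersetCard] at hS
    obtain ⟨⟨hsub, hcard⟩, hinj⟩ := hS
    refine mem_powersetCard.2 ⟨fun d hd => ?_, ?_⟩
    · obtain ⟨p, hp, rfl⟩ := mem_image.1 hd
      exact hD p (hsub hp)
    · rw [card_image_of_injOn fun p hp p' hp' => hinj p hp p' hp', hcard]
  rw [card_eq_sum_card_fiberwise hmaps]
  refine sum_congr rfl fun T hT => ?_
  rw [filter_filter, card_powersetCard_injOn_image_eq_prod s f (mem_powersetCard.1 hT).2]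

end Transversals

theorem coeff_ascPochhammer_nat (n k : ℕ) :
    (ascPochhammer ℕ n).coeff k = Nat.stirlingFirst n k := by
  induction n generalizing k with
  | zero => cases k <;> simp [coeff_one]
  | succ n ih =>
    rw [ascPochhammer_succ_right, mul_add, coeff_add, ← C_eq_natCast, coeff_mul_C, Nat.cast_id]
    cases k with
    | zero => cases n <;> simp [ih]
    | succ k => rw [coeff_mul_X, ih, ih, Nat.stirlingFirst_succ_succ]; ring

theorem coeff_ascPochhammer_nat_sq {n : ℕ} (hn : 0 < n) (k : ℕ) :
    (ascPochhammer ℕ n ^ 2).coeff k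
      = ∑ j ∈ Icc 1 (k - 1), Nat.stirlingFirst n j * Nat.stirlingFirst n (k - j) := by
  obtain ⟨n, rfl⟩ := Nat.exists_eq_add_of_le' hn
  simp only [sq, coeff_mul, coeff_ascPochhammer_nat]
  rw [Nat.sum_antidiagonal_eq_sum_range_succ fun i j =>
    Nat.stirlingFirst (n + 1) i * Nat.stirlingFirst (n + 1) j]
  symm
  refine sum_subset (fun j hj => by simp only [mem_Icc, mem_range] at hj ⊢; omega)
    fun j hj hj' => ?_
  simp only [mem_Icc, mem_range] at hj hj'
  obtain rfl | rfl : j = 0 ∨ j = k := by omega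
  all_goals simp

theorem ascPochhammer_nat_eq_X_mul_prod {n : ℕ} (hn : 0 < n) :
    ascPochhammer ℕ n = X * ∏ i ∈ range (n - 1), (X + C (i + 1)) := by
  obtain ⟨n, rfl⟩ := Nat.exists_eq_add_of_le' hn
  induction n with
  | zero => simp
  | succ n ih =>
    rw [ascPochhammer_succ_right, ih n.succ_pos, Nat.add_sub_cancel, Nat.add_sub_cancel,
      prod_range_succ, ← C_eq_natCast]
    push_cast; ring

theorem coeff_X_add_C_pow_mul {R : Type*} [CommSemiring R] (r : R) (M k : ℕ) (p : R[X]) :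
    ((X + C r) ^ M * p).coeff k
      = ∑ l ∈ range (M + 1), r ^ (M - l) * M.choose l * if l ≤ k then p.coeff (k - l) else 0 := by
  rw [add_pow, sum_mul, finsetSum_coeff]
  refine sum_congr rfl fun l _ => ?_
  rw [← C_pow, ← C_eq_natCast, show X ^ l * C (r ^ (M - l)) * C (M.choose l : R) * p
      = C (r ^ (M - l) * M.choose l) * (X ^ l * p) by rw [C_mul]; ring,
    coeff_C_mul, coeff_X_pow_mul']

theorem coeff_X_add_C_pow_mul_ascPochhammer_nat_sq {n : ℕ} (hn : 0 < n) (r M k : ℕ) :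
    ((X + C r) ^ M * ascPochhammer ℕ n ^ 2).coeff k
      = ∑ l ∈ range (M + 1), r ^ (M - l) * M.choose l *
          ∑ j ∈ Icc 1 (k - 1 - l), Nat.stirlingFirst n j * Nat.stirlingFirst n (k - j - l) := by
  rw [coeff_X_add_C_pow_mul]
  refine sum_congr rfl fun l _ => ?_
  rw [coeff_ascPochhammer_nat_sq hn, Nat.cast_id]
  congr 1
  split_ifs with hl
  · rw [Nat.sub_right_comm k l 1]
    exact sum_congr rfl fun j _ => by rw [Nat.sub_right_comm k l j]
  · rw [Icc_eq_empty (by omega), sum_empty]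

noncomputable def diagonal (m n : ℕ) (d : ℤ) : Finset (ℤ × ℤ) := {p ∈ board m n | p.1 - p.2 = d}

theorem card_diagonal (m n : ℕ) (d : ℤ) :
    #(diagonal m n d) = (min (m : ℤ) (d + n) + 1 - max 1 (d + 1)).toNat := by
  have himage : diagonal m n d
      = (Icc (max 1 (d + 1)) (min (m : ℤ) (d + n))).image fun x => (x, x - d) := by
    ext ⟨x, y⟩
    simp only [diagonal, board, mem_filter, mem_product, mem_Icc, mem_image, Prod.mk.injEq]
    constructor
    · rintro ⟨⟨⟨h1, h2⟩, h3, h4⟩, h5⟩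
      exact ⟨x, by omega, rfl, by omega⟩
    · rintro ⟨x, hx, rfl, rfl⟩
      omega
  rw [himage, card_image_of_injective _ fun a b h => (Prod.mk.inj h).1, Int.card_Icc]

theorem X_sq_mul_prod_diagonal {m n : ℕ} (hn : 0 < n) (hnm : n ≤ m) :
    X ^ 2 * ∏ d ∈ Icc (1 - n : ℤ) (m - 1), (X + C #(diagonal m n d))
      = (X + C n) ^ (m - n + 1) * ascPochhammer ℕ n ^ 2 := by
  set f : ℕ → ℕ[X] := fun k => X + C #(diagonal m n (k + 1 - n))
  have hreindex : ∏ d ∈ Icc (1 - n : ℤ) (m - 1), (X + C #(diagonal m n d))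
      = ∏ k ∈ range (n - 1 + ((m - n + 1) + (n - 1))), f k := by
    refine prod_nbij' (fun d => (d + n - 1).toNat) (fun k => (k : ℤ) + 1 - n) ?_ ?_ ?_ ?_ ?_ <;>
      intro a ha <;>
      simp only [f, mem_Icc, mem_range] at ha ⊢
    all_goals try congr 4
    all_goals omega
  have hlow : ∀ k < n - 1, f k = X + C (k + 1) := by
    intro k hk; simp only [f, card_diagonal]; congr 2; omega
  have hmid : ∀ k < m - n + 1, f (n - 1 + k) = X + C n := by
    intro k hk; simp only [f, card_diagonal]; congr 2; omega
  have hhigh : ∏ k ∈ range (n - 1), f (n - 1 + (m - n + 1 + k))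
      = ∏ k ∈ range (n - 1), (X + C (k + 1)) := by
    rw [← prod_range_reflect]
    refine prod_congr rfl fun k hk => ?_
    simp only [f, card_diagonal, mem_range] at hk ⊢; congr 2; omega
  rw [hreindex, prod_range_add, prod_range_add, prod_congr rfl fun k hk => hlow k (mem_range.1 hk),
    prod_congr rfl fun k hk => hmid k (mem_range.1 hk), prod_const, card_range, hhigh,
    ascPochhammer_nat_eq_X_mul_prod hn]
  ring

theorem semibishop_count_general (m n q : ℕ) (hn : 0 < n) (hnm : n ≤ m) :
    (((board m n).powersetCard q).filter
        (fun S => ∀ p ∈ S, ∀ p' ∈ S, p.1 - p.2 = p'.1 - p'.2 → p = p')).card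
      = ∑ l ∈ Finset.range (m - n + 2),
          n ^ (m - n + 1 - l) * Nat.choose (m - n + 1) l *
            ∑ j ∈ Finset.Icc 1 (m + n - q - l),
              stirling1 n j * stirling1 n (m + n + 1 - q - j - l) := by
  have hdiag : ∀ p ∈ board m n, p.1 - p.2 ∈ Icc (1 - n : ℤ) (m - 1) := by
    simp only [board, mem_product, mem_Icc]
    omega
  rw [card_powersetCard_injOn_eq_sum_prod _ _ hdiag, stirling1_eq_stirlingFirst]
  rcases le_or_gt q (m + n - 1) with hq | hq
  · have hcard : #(Icc (1 - n : ℤ) (m - 1)) = m + n - 1 := by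
      rw [Int.card_Icc]; omega
    calc ∑ T ∈ (Icc (1 - n : ℤ) (m - 1)).powersetCard q, ∏ d ∈ T, #(diagonal m n d)
        = (∏ d ∈ Icc (1 - n : ℤ) (m - 1), (X + C #(diagonal m n d))).coeff (m + n - 1 - q) := by
          rw [prod_X_add_C_coeff _ _ (by omega), hcard, Nat.sub_sub_self hq]
      _ = ((X + C n) ^ (m - n + 1) * ascPochhammer ℕ n ^ 2).coeff (m + n + 1 - q) := by
          rw [← X_sq_mul_prod_diagonal hn hnm, show m + n + 1 - q = m + n - 1 - q + 2 by omega,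
            coeff_X_pow_mul]
      _ = _ := by
          rw [coeff_X_add_C_pow_mul_ascPochhammer_nat_sq hn,
            show m + n + 1 - q - 1 = m + n - q by omega]
  · rw [powersetCard_eq_empty.2 (by rw [Int.card_Icc]; omega), sum_empty]
    refine (sum_eq_zero fun l _ => ?_).symm
    rw [Icc_eq_empty (by omega), sum_empty, mul_zero]

/-- The number of nonattacking configurations of `q` semibishops (one-move riders
with move `(1,1)`, attacking along diagonals `p ↦ p₁ - p₂`) on the `m × n` board
with `m ≥ n ≥ 1`. -/
theorem semibishop_count (m n q : ℕ) (hn : 0 < n) (hnm : n ≤ m) (hq : 0 < q) :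
    (((board m n).powersetCard q).filter
        (fun S => ∀ p ∈ S, ∀ p' ∈ S, p.1 - p.2 = p'.1 - p'.2 → p = p')).card
      = ∑ l ∈ Finset.range (m - n + 2),
          n ^ (m - n + 1 - l) * Nat.choose (m - n + 1) l *
            ∑ j ∈ Finset.Icc 1 (m + n - q - l),
              stirling1 n j * stirling1 n (m + n + 1 - q - j - l) :=
  semibishop_count_general m n q hn hnm
end

section
/- Let L be a finite multiset of natural numbers in which the distinct values are a with multiplicity A, a+1 with multiplicity B, and each of 1, 2, …, a-1 with multiplicity M. Then for any q ≥ 0, the q-th elementary symmetric function of L equals Σ_{k+j+x₁+⋯+x_M = q} C(A, j)·a^j · C(B, k)·(a+1)^k · Π_{i=1}^{M} [a brack a - xᵢ], where [· brack ·] are unsigned Stirling numbers of the first kind. -/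
open Polynomial Finset

theorem Finset.Nat.sum_antidiagonalTuple_succ {M : Type*} [AddCommMonoid M] (k n : ℕ)
    (f : (Fin (k + 1) → ℕ) → M) :
    ∑ x ∈ antidiagonalTuple (k + 1) n, f x
      = ∑ p ∈ antidiagonal n, ∑ x ∈ antidiagonalTuple k p.2, f (Fin.cons p.1 x) := by
  simp only [Finset.sum, antidiagonalTuple, Multiset.Nat.antidiagonalTuple,
    List.Nat.antidiagonalTuple, Multiset.map_coe, Multiset.sum_coe, List.flatMap,
    List.map_flatten, List.sum_flatten, List.map_map]
  rw [show (antidiagonal n).val = (List.Nat.antidiagonal n : Multiset (ℕ × ℕ)) from rfl,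
    Multiset.map_coe, Multiset.sum_coe]
  simp only [Function.comp_def, List.map_map]

namespace Multiset

theorem bind_replicate_eq_nsmul {α : Type*} (s : Multiset α) (m : ℕ) :
    s.bind (fun x => replicate m x) = m • s := by
  induction s using Multiset.induction_on with
  | empty => simp
  | cons a s ih => rw [cons_bind, ih, ← singleton_add, nsmul_add, nsmul_singleton]

section Esymm

variable {R : Type*} [CommSemiring R]

@[simp]
theorem esymm_zero_right (s : Multiset R) : s.esymm 0 = 1 := by
  simp [esymm]

@[simp]
theorem esymm_zero_succ (k : ℕ) : (0 : Multiset R).esymm (k + 1) = 0 := by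
  simp [esymm, powersetCard_zero_right]

theorem esymm_cons_succ (a : R) (s : Multiset R) (k : ℕ) :
    (a ::ₘ s).esymm (k + 1) = s.esymm (k + 1) + a * s.esymm k := by
  simp [esymm, powersetCard_cons, sum_map_mul_left]

theorem prod_one_add_C_mul_X_coeff (s : Multiset R) (k : ℕ) :
    ((s.map fun r => 1 + C r * X).prod).coeff k = s.esymm k := by
  induction s using Multiset.induction_on generalizing k with
  | empty => cases k <;> simp [coeff_one]
  | cons a s ih =>
    set P := (s.map fun r => 1 + C r * X).prod
    rw [map_cons, prod_cons, show (1 + C a * X) * P = P + C a * (X * P) by ring]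
    cases k with
    | zero => simp [ih]
    | succ k => rw [coeff_add, coeff_C_mul, coeff_X_mul, ih, ih, esymm_cons_succ]

theorem esymm_add (s t : Multiset R) (n : ℕ) :
    (s + t).esymm n = ∑ p ∈ HasAntidiagonal.antidiagonal n, s.esymm p.1 * t.esymm p.2 := by
  simp only [← prod_one_add_C_mul_X_coeff, map_add, prod_add, coeff_mul]

theorem esymm_sum_fin {k : ℕ} (s : Fin k → Multiset R) (n : ℕ) :
    (∑ i, s i).esymm n
      = ∑ f ∈ Finset.Nat.antidiagonalTuple k n, ∏ i, (s i).esymm (f i) := by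
  induction k generalizing n with
  | zero => cases n <;> simp
  | succ k ih =>
    simp only [Fin.sum_univ_succ, esymm_add, ih, Finset.Nat.sum_antidiagonalTuple_succ,
      Finset.mul_sum, Fin.prod_univ_succ, Fin.cons_zero, Fin.cons_succ]

theorem esymm_replicate (n : ℕ) (a : R) (k : ℕ) :
    (replicate n a).esymm k = n.choose k * a ^ k := by
  induction n generalizing k with
  | zero => cases k <;> simp
  | succ n ih =>
    cases k with
    | zero => simp
    | succ k =>
      rw [replicate_succ, esymm_cons_succ, ih, ih, Nat.choose_succ_succ']
      push_cast
      ring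

end Esymm

theorem esymm_Icc_one_eq_stirlingFirst (n t : ℕ) :
    (Finset.Icc 1 n).val.esymm t = Nat.stirlingFirst (n + 1) (n + 1 - t) := by
  induction n generalizing t with
  | zero => cases t <;> simp [Nat.stirlingFirst_self]
  | succ n ih =>
    rw [← insert_Icc_right_eq_Icc_add_one (by omega), insert_val_of_notMem (by simp)]
    cases t with
    | zero => simp [Nat.stirlingFirst_self]
    | succ t =>
      rw [esymm_cons_succ, ih, ih]
      rcases le_or_gt t n with ht | ht
      · rw [show n + 1 + 1 - (t + 1) = n - t + 1 by omega, show n + 1 - t = n - t + 1 by omega,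
          show n + 1 - (t + 1) = n - t by omega, Nat.stirlingFirst_succ_succ (n + 1) (n - t)]
        ring
      · rw [show n + 1 + 1 - (t + 1) = 0 by omega, show n + 1 - t = 0 by omega,
          show n + 1 - (t + 1) = 0 by omega]
        simp

end Multiset

/-- Abstract form of Theorem 3.3: the `q`-th elementary symmetric function of the
multiset consisting of `a` with multiplicity `A`, `a+1` with multiplicity `B`, and
each of `1, …, a-1` with multiplicity `M`, as a sum over tuples of nonnegative
integers `(j, k, x₁, …, x_M)` with `j + k + x₁ + ⋯ + x_M = q` (encoded as
`f : Fin (M+2) → ℕ` with `f 0 = j`, `f 1 = k`, `f (i+2) = xᵢ`). -/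
theorem esymm_three_block (a A B M q : ℕ) (ha : 0 < a) :
    (Multiset.replicate A a + Multiset.replicate B (a + 1)
        + (Finset.Icc 1 (a - 1)).val.bind (fun l => Multiset.replicate M l)).esymm q
      = ∑ f ∈ Finset.Nat.antidiagonalTuple (M + 2) q,
          Nat.choose A (f 0) * a ^ (f 0) *
            (Nat.choose B (f 1) * (a + 1) ^ (f 1)) *
            ∏ i : Fin M, stirling1 a (a - f i.succ.succ) := by
  obtain ⟨n, rfl⟩ := Nat.exists_eq_add_one_of_ne_zero ha.ne'
  set blocks : Fin (M + 2) → Multiset ℕ :=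
    Fin.cons (.replicate A (n + 1)) (Fin.cons (.replicate B (n + 1 + 1)) fun _ => (Icc 1 n).val)
  have h_blocks : Multiset.replicate A (n + 1) + Multiset.replicate B (n + 1 + 1)
      + (Icc 1 (n + 1 - 1)).val.bind (fun l => Multiset.replicate M l) = ∑ i, blocks i := by
    simp [blocks, Fin.sum_univ_succ, Multiset.bind_replicate_eq_nsmul, add_assoc]
  rw [h_blocks, Multiset.esymm_sum_fin, stirling1_eq_stirlingFirst]
  refine sum_congr rfl fun f _ => ?_
  simp [blocks, Fin.prod_univ_succ, Multiset.esymm_replicate,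
    Multiset.esymm_Icc_one_eq_stirlingFirst, mul_assoc]
end
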